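/- arXiv:1506.06738 — 10 statements merged into one kernel-verified Lean document; each statement's English description precedes it below -/
import Mathlib

section
/- Let n ≥ 1 and let A be an n×n unitary matrix over ℂ. Then A has a biunimodular vector if and only if there exist matrices D₁, S, D₂ ∈ U(n) such that A = D₁ · S · D₂, where D₁ is a diagonal matrix whose diagonal entries all have modulus 1, S satisfies S·𝟏 = 𝟏 (with 𝟏 the all-ones vector), and D₂ is a diagonal matrix whose diagonal entries all have modulus 1 and whose first diagonal entry equals 1. -/
/-- A vector `v` is biunimodular for `A` if every entry of `v` and of `A.mulVec v`
has modulus 1. -/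
def IsBiunimodular {n : ℕ} (A : Matrix (Fin n) (Fin n) ℂ) (v : Fin n → ℂ) : Prop :=
  (∀ k, ‖v k‖ = 1) ∧ ∀ k, ‖A.mulVec v k‖ = 1

/-!
If `v` is biunimodular for `A` and `w = A v`, then `S = diag(w)⁻¹ A diag(v)` is
unitary and maps `𝟏` to `diag(w̄) A v = diag(w̄) w = 𝟏`, so `A = diag(w) S diag(v̄)`;
rescaling `v` by the unimodular scalar `v̄₀` makes the first entry of `diag(v̄)` equal
to `1`. Conversely, if `A = D₁ S D₂`, the vector `v = D̄₂ 𝟏` satisfies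
`A v = D₁ S 𝟏 = D₁ 𝟏`, which is unimodular.
-/

open Matrix

lemma RCLike.star_mul_self_of_norm_eq_one {𝕜 : Type*} [RCLike 𝕜] {z : 𝕜} (h : ‖z‖ = 1) :
    star z * z = 1 := by
  rw [RCLike.star_def, RCLike.conj_mul, h]
  simp

namespace Matrix

variable {n 𝕜 : Type*} [Fintype n] [DecidableEq n] [RCLike 𝕜]

lemma diagonal_mul_diagonal_star {d : n → 𝕜} (hd : ∀ i, ‖d i‖ = 1) :
    diagonal d * diagonal (star d) = 1 := by
  rw [diagonal_mul_diagonal, ← diagonal_one]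
  exact congrArg diagonal (funext fun i => by
    rw [mul_comm]
    exact RCLike.star_mul_self_of_norm_eq_one (hd i))

lemma diagonal_mem_unitaryGroup {d : n → 𝕜} (hd : ∀ i, ‖d i‖ = 1) :
    diagonal d ∈ unitaryGroup n 𝕜 := by
  rw [mem_unitaryGroup_iff, star_eq_conjTranspose, diagonal_conjTranspose]
  exact diagonal_mul_diagonal_star hd

lemma diagonal_star_mulVec_self {d : n → 𝕜} (hd : ∀ i, ‖d i‖ = 1) :
    diagonal (star d) *ᵥ d = 1 :=
  funext fun i => by
    rw [mulVec_diagonal]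
    exact RCLike.star_mul_self_of_norm_eq_one (hd i)

lemma diagonal_mulVec_star {d : n → 𝕜} (hd : ∀ i, ‖d i‖ = 1) :
    diagonal d *ᵥ star d = 1 := by
  simpa using diagonal_star_mulVec_self (d := star d) (by simpa using hd)

lemma diagonal_mulVec_one (d : n → 𝕜) : diagonal d *ᵥ 1 = d :=
  funext fun i => by rw [mulVec_diagonal, Pi.one_apply, mul_one]

end Matrix

namespace IsBiunimodular

variable {n : ℕ} {A : Matrix (Fin n) (Fin n) ℂ} {v : Fin n → ℂ}

lemma smul (hv : IsBiunimodular A v) {c : ℂ} (hc : ‖c‖ = 1) : IsBiunimodular A (c • v) := by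
  refine ⟨fun k => ?_, fun k => ?_⟩
  · rw [Pi.smul_apply, smul_eq_mul, norm_mul, hc, hv.1 k, one_mul]
  · rw [mulVec_smul, Pi.smul_apply, smul_eq_mul, norm_mul, hc, hv.2 k, one_mul]

noncomputable def middleFactor (A : Matrix (Fin n) (Fin n) ℂ) (v : Fin n → ℂ) :
    Matrix (Fin n) (Fin n) ℂ :=
  diagonal (star (A *ᵥ v)) * A * diagonal v

lemma middleFactor_mem_unitaryGroup (hA : A ∈ unitaryGroup (Fin n) ℂ)
    (hv : IsBiunimodular A v) : middleFactor A v ∈ unitaryGroup (Fin n) ℂ :=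
  mul_mem (mul_mem (diagonal_mem_unitaryGroup (by simpa using hv.2)) hA)
    (diagonal_mem_unitaryGroup hv.1)

lemma middleFactor_mulVec_one (hv : IsBiunimodular A v) : middleFactor A v *ᵥ 1 = 1 := by
  rw [middleFactor, ← mulVec_mulVec, ← mulVec_mulVec, diagonal_mulVec_one,
    diagonal_star_mulVec_self hv.2]

lemma eq_diagonal_mul_middleFactor_mul_diagonal (hv : IsBiunimodular A v) :
    A = diagonal (A *ᵥ v) * middleFactor A v * diagonal (star v) := by
  simp only [middleFactor, ← mul_assoc, diagonal_mul_diagonal_star hv.2, one_mul]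
  rw [mul_assoc, diagonal_mul_diagonal_star hv.1, mul_one]

end IsBiunimodular

lemma isBiunimodular_diagonal_mul_mul_diagonal {n : ℕ} {d₁ d₂ : Fin n → ℂ}
    {S : Matrix (Fin n) (Fin n) ℂ} (h₁ : ∀ i, ‖d₁ i‖ = 1) (h₂ : ∀ i, ‖d₂ i‖ = 1)
    (hS : S *ᵥ 1 = 1) : IsBiunimodular (diagonal d₁ * S * diagonal d₂) (star d₂) := by
  refine ⟨fun k => by rw [Pi.star_apply, norm_star, h₂ k], fun k => ?_⟩
  rw [← mulVec_mulVec, ← mulVec_mulVec, diagonal_mulVec_star h₂, hS, diagonal_mulVec_one,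
    h₁ k]

/-- A unitary matrix `A` has a biunimodular vector iff `A = D₁ * S * D₂` with
`D₁, S, D₂` unitary, `D₁` diagonal with unimodular diagonal entries, `S` fixing the
all-ones vector, and `D₂` diagonal with unimodular diagonal entries whose first
diagonal entry is `1`. -/
theorem unitary_has_biunimodular_iff_factorization
    (n : ℕ) (hn : 1 ≤ n) (A : Matrix (Fin n) (Fin n) ℂ)
    (hA : A ∈ Matrix.unitaryGroup (Fin n) ℂ) :
    (∃ v : Fin n → ℂ, IsBiunimodular A v) ↔
      ∃ D₁ S D₂ : Matrix (Fin n) (Fin n) ℂ,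
        D₁ ∈ Matrix.unitaryGroup (Fin n) ℂ ∧ D₁.IsDiag ∧
          (∀ i, ‖D₁ i i‖ = 1) ∧
        S ∈ Matrix.unitaryGroup (Fin n) ℂ ∧
          S.mulVec (fun _ => 1) = (fun _ => 1) ∧
        D₂ ∈ Matrix.unitaryGroup (Fin n) ℂ ∧ D₂.IsDiag ∧
          (∀ i, ‖D₂ i i‖ = 1) ∧ D₂ ⟨0, hn⟩ ⟨0, hn⟩ = 1 ∧
        A = D₁ * S * D₂ := by
  constructor
  · rintro ⟨v₀, hv₀⟩
    set v := star (v₀ ⟨0, hn⟩) • v₀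
    have hv : IsBiunimodular A v := hv₀.smul (by rw [norm_star, hv₀.1])
    refine ⟨diagonal (A *ᵥ v), IsBiunimodular.middleFactor A v, diagonal (star v),
      diagonal_mem_unitaryGroup hv.2, isDiag_diagonal _, by simpa using hv.2,
      hv.middleFactor_mem_unitaryGroup hA, hv.middleFactor_mulVec_one,
      diagonal_mem_unitaryGroup (by simpa using hv.1), isDiag_diagonal _, by simpa using hv.1,
      ?_, hv.eq_diagonal_mul_middleFactor_mul_diagonal⟩
    simp only [diagonal_apply_eq, Pi.star_apply, v, Pi.smul_apply, smul_eq_mul, star_mul,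
      star_star]
    exact RCLike.star_mul_self_of_norm_eq_one (hv₀.1 _)
  · rintro ⟨D₁, S, D₂, -, hD₁, hD₁_norm, -, hS, -, hD₂, hD₂_norm, -, rfl⟩
    rw [← hD₁.diagonal_diag, ← hD₂.diagonal_diag]
    exact ⟨_, isBiunimodular_diagonal_mul_mul_diagonal hD₁_norm hD₂_norm hS⟩
end

section
/- Let n ≥ 1 and let A be an n×n unitary matrix over ℂ. For every u ∈ ℂⁿ with max_k |u_k| ≤ 1 one has ∑_k |(Au)_k| ≤ n. Moreover, A has a biunimodular vector if and only if there exists u ∈ ℂⁿ with max_k |u_k| = 1 and ∑_k |(Au)_k| = n (i.e. the operator norm of A from (ℂⁿ, ‖·‖_∞) to (ℂⁿ, ‖·‖₁) equals n). -/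
open Finset Matrix

namespace Finset

variable {ι : Type*} {s : Finset ι} {f : ι → ℝ}

theorem sum_sub_one_sq (s : Finset ι) (f : ι → ℝ) :
    ∑ i ∈ s, (f i - 1) ^ 2 = ∑ i ∈ s, f i ^ 2 - 2 * ∑ i ∈ s, f i + #s := by
  simp only [sub_sq, one_pow, mul_one, sum_add_distrib, sum_sub_distrib, ← mul_sum]
  simp

theorem sum_le_card_of_sum_sq_le_card (h : ∑ i ∈ s, f i ^ 2 ≤ #s) : ∑ i ∈ s, f i ≤ #s := by
  have := sum_sub_one_sq s f
  have : 0 ≤ ∑ i ∈ s, (f i - 1) ^ 2 := sum_nonneg fun i _ => sq_nonneg _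
  linarith

theorem eq_one_of_sum_sq_le_card_of_sum_eq_card (h : ∑ i ∈ s, f i ^ 2 ≤ #s)
    (hsum : ∑ i ∈ s, f i = #s) : ∀ i ∈ s, f i = 1 := by
  have hzero : ∑ i ∈ s, (f i - 1) ^ 2 = 0 :=
    le_antisymm (by linarith [sum_sub_one_sq s f]) (sum_nonneg fun i _ => sq_nonneg _)
  intro i hi
  have := (sum_eq_zero_iff_of_nonneg fun i _ => sq_nonneg (f i - 1)).1 hzero i hi
  exact sub_eq_zero.1 (pow_eq_zero_iff two_ne_zero |>.1 this)

theorem eq_one_of_le_one_of_sum_sq_eq_card (hf₀ : ∀ i ∈ s, 0 ≤ f i) (hf₁ : ∀ i ∈ s, f i ≤ 1)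
    (h : ∑ i ∈ s, f i ^ 2 = #s) : ∀ i ∈ s, f i = 1 := by
  have hsq : ∀ i ∈ s, f i ^ 2 = 1 :=
    (sum_eq_sum_iff_of_le fun i hi => pow_le_one₀ (hf₀ i hi) (hf₁ i hi)).1 (by simpa using h)
  exact fun i hi => (pow_eq_one_iff_of_nonneg (hf₀ i hi) two_ne_zero).1 (hsq i hi)

end Finset

namespace Matrix

variable {ι 𝕜 : Type*} [Fintype ι] [DecidableEq ι] [RCLike 𝕜] {A : Matrix ι ι 𝕜}

theorem sum_norm_sq_mulVec_of_mem_unitaryGroup (hA : A ∈ unitaryGroup ι 𝕜) (u : ι → 𝕜) :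
    ∑ i, ‖(A *ᵥ u) i‖ ^ 2 = ∑ i, ‖u i‖ ^ 2 := by
  have sum_norm_sq : ∀ v : ι → 𝕜, ((∑ i, ‖v i‖ ^ 2 : ℝ) : 𝕜) = star v ⬝ᵥ v := fun v => by
    simp [dotProduct, RCLike.conj_mul]
  apply RCLike.ofReal_injective (K := 𝕜)
  rw [sum_norm_sq, sum_norm_sq, star_mulVec, dotProduct_mulVec, vecMul_vecMul,
    ← star_eq_conjTranspose, (mem_unitaryGroup_iff').1 hA, vecMul_one]

theorem sum_norm_sq_mulVec_le_card_of_mem_unitaryGroup (hA : A ∈ unitaryGroup ι 𝕜)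
    {u : ι → 𝕜} (hu : ∀ i, ‖u i‖ ≤ 1) : ∑ i, ‖(A *ᵥ u) i‖ ^ 2 ≤ Fintype.card ι := by
  rw [sum_norm_sq_mulVec_of_mem_unitaryGroup hA]
  exact (sum_le_sum fun i _ => pow_le_one₀ (norm_nonneg (u i)) (hu i)).trans_eq (by simp)

end Matrix

/-- For a unitary `A`, `‖Au‖₁ ≤ n` whenever `‖u‖_∞ ≤ 1`, and `A` has a biunimodular
vector iff the norm `n` is attained, i.e. there is `u` with `max_k |u_k| = 1` and
`‖Au‖₁ = n`. -/
theorem biunimodular_iff_infty_to_one_norm_eq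
    (n : ℕ) (hn : 1 ≤ n) (A : Matrix (Fin n) (Fin n) ℂ)
    (hA : A ∈ Matrix.unitaryGroup (Fin n) ℂ) :
    (∀ u : Fin n → ℂ, (∀ k, ‖u k‖ ≤ 1) →
        ∑ k, ‖A.mulVec u k‖ ≤ (n : ℝ)) ∧
    ((∃ v : Fin n → ℂ, IsBiunimodular A v) ↔
      ∃ u : Fin n → ℂ, (∀ k, ‖u k‖ ≤ 1) ∧ (∃ k, ‖u k‖ = 1) ∧
        ∑ k, ‖A.mulVec u k‖ = (n : ℝ)) := by
  have hsq : ∀ u : Fin n → ℂ, (∀ k, ‖u k‖ ≤ 1) →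
      ∑ k, ‖(A *ᵥ u) k‖ ^ 2 ≤ #(univ : Finset (Fin n)) :=
    fun u hu => by simpa using sum_norm_sq_mulVec_le_card_of_mem_unitaryGroup hA hu
  refine ⟨fun u hu => by simpa using sum_le_card_of_sum_sq_le_card (hsq u hu), ?_, ?_⟩
  · rintro ⟨v, hv, hAv⟩
    exact ⟨v, fun k => (hv k).le, ⟨⟨0, hn⟩, hv _⟩, by simp [hAv]⟩
  · rintro ⟨u, hu, -, hsum⟩
    have hAu : ∀ k, ‖(A *ᵥ u) k‖ = 1 := by
      simpa using eq_one_of_sum_sq_le_card_of_sum_eq_card (hsq u hu) (by simpa using hsum)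
    have hu_sq : ∑ k, ‖u k‖ ^ 2 = #(univ : Finset (Fin n)) := by
      simp [← sum_norm_sq_mulVec_of_mem_unitaryGroup hA, hAu]
    exact ⟨u, fun k => eq_one_of_le_one_of_sum_sq_eq_card (fun k _ => norm_nonneg (u k))
      (fun k _ => hu k) hu_sq k (mem_univ k), hAu⟩
end

section
/- Every 2×2 unitary matrix over ℂ has a biunimodular vector. -/
open Complex ComplexConjugate

namespace Matrix

variable {𝕜 n : Type*} [RCLike 𝕜] [Fintype n] [DecidableEq n] {A : Matrix n n 𝕜}

theorem sum_norm_sq_row_of_mem_unitaryGroup (hA : A ∈ unitaryGroup n 𝕜) (i : n) :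
    ∑ j, ‖A i j‖ ^ 2 = 1 := by
  have h := congrFun (congrFun (mem_unitaryGroup_iff.mp hA) i) i
  simp only [mul_apply, star_apply, one_apply_eq, ← starRingEnd_apply, RCLike.mul_conj] at h
  exact_mod_cast h

theorem sum_conj_mul_of_mem_unitaryGroup (hA : A ∈ unitaryGroup n 𝕜) {i j : n} (hij : i ≠ j) :
    ∑ k, conj (A k i) * A k j = 0 := by
  have h := congrFun (congrFun (mem_unitaryGroup_iff'.mp hA) i) j
  simpa [mul_apply, one_apply_ne hij] using h

end Matrix

theorem Complex.exists_norm_eq_one_re_mul_eq_zero (w : ℂ) : ∃ z : ℂ, ‖z‖ = 1 ∧ (w * z).re = 0 := by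
  -- rotating `w` by `-arg w` makes it real, and a further factor `I` makes it imaginary
  refine ⟨I * exp (↑(-arg w) * I), by rw [norm_mul, norm_I, norm_exp_ofReal_mul_I, one_mul], ?_⟩
  have hrot : w * exp (↑(-arg w) * I) = ‖w‖ := by
    nth_rw 1 [← norm_mul_exp_arg_mul_I w]
    rw [mul_assoc, ← exp_add]
    push_cast
    simp
  calc (w * (I * exp (↑(-arg w) * I))).re = (I * (w * exp (↑(-arg w) * I))).re := by ring_nf
    _ = 0 := by rw [hrot]; simp

theorem Complex.norm_add_mul_eq_one {x y z : ℂ} (hxy : ‖x‖ ^ 2 + ‖y‖ ^ 2 = 1) (hz : ‖z‖ = 1)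
    (hre : (conj x * y * z).re = 0) : ‖x + y * z‖ = 1 := by
  have hcross : (x * conj (y * z)).re = 0 := by
    rw [← conj_re, map_mul, conj_conj, ← mul_assoc]; exact hre
  have hsq : ‖x + y * z‖ ^ 2 = 1 := by
    rw [Complex.sq_norm, normSq_add, hcross, ← Complex.sq_norm, ← Complex.sq_norm, norm_mul, hz]
    linarith
  exact (pow_eq_one_iff_of_nonneg (norm_nonneg _) two_ne_zero).mp hsq

/-- Every 2×2 unitary matrix over ℂ has a biunimodular vector. -/
theorem every_unitary_2x2_has_biunimodular
    (A : Matrix (Fin 2) (Fin 2) ℂ) (hA : A ∈ Matrix.unitaryGroup (Fin 2) ℂ) :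
    ∃ v : Fin 2 → ℂ, IsBiunimodular A v := by
  obtain ⟨z, hz, hre⟩ := exists_norm_eq_one_re_mul_eq_zero (conj (A 0 0) * A 0 1)
  have hcol : conj (A 0 0) * A 0 1 + conj (A 1 0) * A 1 1 = 0 := by
    simpa [Fin.sum_univ_two] using Matrix.sum_conj_mul_of_mem_unitaryGroup hA zero_ne_one
  have hrow (i : Fin 2) : ‖A i 0‖ ^ 2 + ‖A i 1‖ ^ 2 = 1 := by
    simpa [Fin.sum_univ_two] using Matrix.sum_norm_sq_row_of_mem_unitaryGroup hA i
  refine ⟨![1, z], fun k => by fin_cases k <;> simp [hz], fun k => ?_⟩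
  have hmul : A.mulVec ![1, z] k = A k 0 + A k 1 * z := by
    simp [Matrix.mulVec, dotProduct, Fin.sum_univ_two]
  rw [hmul]
  refine norm_add_mul_eq_one (hrow k) hz ?_
  fin_cases k
  · exact hre
  · simp [eq_neg_of_add_eq_zero_right hcol, hre]
end

section
/- Let A be the 2×2 complex matrix with rows (x, y) and (−z·conj(y), z·conj(x)), where z ∈ ℂ has |z| = 1 and x, y ∈ ℂ satisfy |x|² + |y|² = 1 (so A is unitary). Then for any d ∈ ℂ with |d| = 1, the vector (1, d) is a biunimodular vector for A if and only if Re(conj(x)·y·d) = 0. In particular, if x·y ≠ 0, then the biunimodular vectors for A with first entry 1 are exactly (1, i·e^{i(α−β)}) and (1, −i·e^{i(α−β)}), where α = arg x and β = arg y. -/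
open ComplexConjugate

namespace Complex

lemma norm_add_mul_sq (x y d : ℂ) :
    ‖x + y * d‖ ^ 2 = ‖x‖ ^ 2 + ‖y‖ ^ 2 * ‖d‖ ^ 2 + 2 * (conj x * y * d).re := by
  simp only [Complex.sq_norm, normSq_apply, mul_re, mul_im, add_re, add_im, conj_re, conj_im]
  ring

lemma norm_conj_mul_sub_conj_sq (x y d : ℂ) :
    ‖conj x * d - conj y‖ ^ 2 = ‖x‖ ^ 2 * ‖d‖ ^ 2 + ‖y‖ ^ 2 - 2 * (conj x * y * d).re := by
  simp only [Complex.sq_norm, normSq_apply, mul_re, mul_im, sub_re, sub_im, conj_re, conj_im]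
  ring

lemma re_eq_zero_iff_eq_I_or_eq_neg_I {w : ℂ} (hw : ‖w‖ = 1) : w.re = 0 ↔ w = I ∨ w = -I := by
  constructor
  · intro hre
    have him : w.im ^ 2 = 1 := by rw [← sq_norm_sub_sq_re, hw, hre]; ring
    rcases sq_eq_one_iff.1 him with him | him
    · exact Or.inl (ext (by simp [hre]) (by simp [him]))
    · exact Or.inr (ext (by simp [hre]) (by simp [him]))
  · rintro (rfl | rfl) <;> simp

lemma conj_mul_mul_exp_I_mul_arg_sub (x y : ℂ) :
    conj x * y * exp (I * (arg x - arg y)) = ‖x‖ * ‖y‖ := by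
  nth_rewrite 1 [← norm_mul_exp_arg_mul_I x, ← norm_mul_exp_arg_mul_I y]
  rw [map_mul, conj_ofReal, ← exp_conj]
  calc _ = ‖x‖ * ‖y‖ * exp (conj (arg x * I) + arg y * I + I * (arg x - arg y)) := by
        rw [exp_add, exp_add]; ring
    _ = ‖x‖ * ‖y‖ := by
        rw [map_mul, conj_ofReal, conj_I,
          show (arg x : ℂ) * -I + arg y * I + I * (arg x - arg y) = 0 by ring, exp_zero, mul_one]

lemma norm_eq_one_and_re_conj_mul_mul_eq_zero_iff {x y : ℂ} (hx : x ≠ 0) (hy : y ≠ 0) (d : ℂ) :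
    ‖d‖ = 1 ∧ (conj x * y * d).re = 0 ↔
      d = I * exp (I * (arg x - arg y)) ∨ d = -(I * exp (I * (arg x - arg y))) := by
  set u := exp (I * (arg x - arg y))
  have hu : ‖u‖ = 1 := by
    simpa only [ofReal_sub] using norm_exp_I_mul_ofReal (arg x - arg y)
  have hu0 : u ≠ 0 := exp_ne_zero _
  have hre : (conj x * y * d).re = ‖x‖ * ‖y‖ * (d / u).re := by
    rw [← re_ofReal_mul, ofReal_mul, ← conj_mul_mul_exp_I_mul_arg_sub, mul_assoc _ u,
      mul_div_cancel₀ _ hu0]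
  have hnorm : ‖d‖ = ‖d / u‖ := by rw [norm_div, hu, div_one]
  rw [hre, hnorm, mul_eq_zero_iff_left (by positivity)]
  constructor
  · rintro ⟨hnorm, hre⟩
    rcases (re_eq_zero_iff_eq_I_or_eq_neg_I hnorm).1 hre with h | h
    · left; rw [← h, div_mul_cancel₀ _ hu0]
    · right; rw [← neg_mul, ← h, div_mul_cancel₀ _ hu0]
  · rintro (rfl | rfl) <;> simp [hu0, neg_div]

end Complex

lemma isBiunimodular_cons_one_iff {x y z : ℂ} (hz : ‖z‖ = 1) (hxy : ‖x‖ ^ 2 + ‖y‖ ^ 2 = 1)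
    (d : ℂ) :
    IsBiunimodular !![x, y; -z * conj y, z * conj x] ![1, d] ↔
      ‖d‖ = 1 ∧ (conj x * y * d).re = 0 := by
  have hrow : -z * conj y + z * conj x * d = z * (conj x * d - conj y) := by ring
  simp only [IsBiunimodular, Fin.forall_fin_two, Matrix.mulVec, dotProduct, Fin.sum_univ_two,
    Matrix.of_apply, Matrix.cons_val_zero, Matrix.cons_val_one, Matrix.cons_val_fin_one,
    norm_one, true_and, mul_one, hrow, norm_mul, hz, one_mul]
  refine and_congr_right fun hd => ?_
  rw [← pow_eq_one_iff_of_nonneg (norm_nonneg _) two_ne_zero,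
    ← pow_eq_one_iff_of_nonneg (norm_nonneg _) two_ne_zero, Complex.norm_add_mul_sq,
    Complex.norm_conj_mul_sub_conj_sq, hd]
  constructor
  · rintro ⟨h, -⟩; linarith
  · intro h; constructor <;> linarith

/-- For the generic unitary 2×2 matrix with rows `(x, y)` and
`(-z·conj y, z·conj x)`: a vector `(1, d)` with `|d| = 1` is biunimodular iff
`Re(conj x · y · d) = 0`; and if `x·y ≠ 0` then the biunimodular vectors with
first entry `1` are exactly `(1, ±i·e^{i(arg x − arg y)})`. -/
theorem biunimodular_vectors_of_u2
    (x y z : ℂ) (hz : ‖z‖ = 1)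
    (hxy : ‖x‖ ^ 2 + ‖y‖ ^ 2 = 1) :
    (∀ d : ℂ, ‖d‖ = 1 →
      (IsBiunimodular !![x, y; -z * (starRingEnd ℂ) y, z * (starRingEnd ℂ) x] ![1, d] ↔
        ((starRingEnd ℂ) x * y * d).re = 0)) ∧
    (x * y ≠ 0 → ∀ v : Fin 2 → ℂ,
      (v 0 = 1 ∧ IsBiunimodular !![x, y; -z * (starRingEnd ℂ) y, z * (starRingEnd ℂ) x] v) ↔
      (v = ![1, Complex.I * Complex.exp (Complex.I * ((x.arg : ℂ) - (y.arg : ℂ)))] ∨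
       v = ![1, -(Complex.I * Complex.exp (Complex.I * ((x.arg : ℂ) - (y.arg : ℂ))))])) := by
  refine ⟨fun d hd => by rw [isBiunimodular_cons_one_iff hz hxy, and_iff_right hd],
    fun hxy0 v => ?_⟩
  obtain ⟨hx, hy⟩ := mul_ne_zero_iff.1 hxy0
  have hsol (d : ℂ) := (isBiunimodular_cons_one_iff hz hxy d).trans
    (Complex.norm_eq_one_and_re_conj_mul_mul_eq_zero_iff hx hy d)
  constructor
  · rintro ⟨hv0, hv⟩
    obtain ⟨d, rfl⟩ : ∃ d, v = ![1, d] := ⟨v 1, by ext i; fin_cases i <;> simp [hv0]⟩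
    rcases (hsol d).1 hv with rfl | rfl
    exacts [Or.inl rfl, Or.inr rfl]
  · rintro (rfl | rfl)
    exacts [⟨rfl, (hsol _).2 (Or.inl rfl)⟩, ⟨rfl, (hsol _).2 (Or.inr rfl)⟩]
end

section
/- A 2×2 complex matrix A is unitary if and only if there exist a, b, c, z ∈ ℂ, each of modulus 1, such that A = (1/2)·[[a(1+z), a·c·(1−z)], [b(1−z), b·c·(1+z)]]. -/
/-!
A unitary `2 × 2` matrix has the form `!![p, q; -θ * conj q, θ * conj p]` with
`|p|² + |q|² = 1` and `|θ| = 1` (the second row is read off from `adj A = det A • Aᴴ`).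
Writing `p = u |p|`, `q = v |q|` with `|u| = |v| = 1` and `w = |p| + |q| i`, so that `|w| = 1`,
one has `|p| = w̄ (1 + w²) / 2` and `|q| = i w̄ (1 - w²) / 2`; hence `z = w²`, `a = u w̄`,
`c = i v ū` parametrize the first row, and `b = θ ā c̄ z̄` the second one.
-/

open Complex ComplexConjugate

namespace Matrix

variable {R : Type*} [CommRing R] [StarRing R]

theorem adjugate_eq_det_smul_star_of_mem_unitaryGroup {n : Type*} [DecidableEq n] [Fintype n]
    {A : Matrix n n R} (hA : A ∈ unitaryGroup n R) : A.adjugate = A.det • star A :=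
  calc A.adjugate = A.adjugate * (A * star A) := by rw [hA.2, Matrix.mul_one]
    _ = A.det • star A := by rw [← Matrix.mul_assoc, adjugate_mul, smul_mul, Matrix.one_mul]

theorem mem_unitaryGroup_fin_two_iff {A : Matrix (Fin 2) (Fin 2) R} :
    A ∈ unitaryGroup (Fin 2) R ↔ ∃ p q θ : R, star p * p + star q * q = 1 ∧ θ ∈ unitary R ∧
      A = !![p, q; -θ * star q, θ * star p] := by
  constructor
  · intro hA
    have hrow : A 0 0 * star (A 0 0) + A 0 1 * star (A 0 1) = 1 := by
      simpa [mul_apply, Fin.sum_univ_two] using congr_fun₂ hA.2 0 0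
    have hadj := adjugate_eq_det_smul_star_of_mem_unitaryGroup hA
    have h10 : -A 1 0 = A.det * star (A 0 1) := by
      simpa [adjugate_fin_two] using congr_fun₂ hadj 1 0
    have h11 : A 1 1 = A.det * star (A 0 0) := by
      simpa [adjugate_fin_two] using congr_fun₂ hadj 0 0
    refine ⟨A 0 0, A 0 1, A.det, by linear_combination hrow, det_of_mem_unitary hA, ?_⟩
    ext i j
    fin_cases i <;> fin_cases j
    · rfl
    · rfl
    · simp [← h10]
    · simpa using h11
  · rintro ⟨p, q, θ, hpq, hθ, rfl⟩
    have hθθ : star θ * θ = 1 := Unitary.star_mul_self_of_mem hθ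
    rw [mem_unitaryGroup_iff, star_eq_conjTranspose]
    ext i j
    fin_cases i <;> fin_cases j <;>
      simp only [Fin.zero_eta, Fin.mk_one, Fin.isValue, mul_apply, of_apply, cons_val', cons_val_zero,
        cons_val_one, cons_val_fin_one, conjTranspose_apply, Fin.sum_univ_two, star_neg, star_mul',
        star_star, neg_mul, mul_neg, neg_neg, one_apply_eq, one_apply_ne, ne_eq, zero_ne_one,
        one_ne_zero, not_false_eq_true]
    · linear_combination hpq
    · ring
    · ring
    · linear_combination hθθ + star θ * θ * hpq

end Matrix

theorem Complex.mem_unitary_iff_norm_eq_one {z : ℂ} : z ∈ unitary ℂ ↔ ‖z‖ = 1 := by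
  rw [Unitary.mem_iff_star_mul_self, star_def, conj_mul']
  norm_cast
  exact pow_eq_one_iff_of_nonneg (norm_nonneg z) two_ne_zero

theorem Complex.exists_mem_unitary_eq_half_mul {p q : ℂ} (hpq : star p * p + star q * q = 1) :
    ∃ a c z : ℂ, a ∈ unitary ℂ ∧ c ∈ unitary ℂ ∧ z ∈ unitary ℂ ∧
      p = a * (1 + z) / 2 ∧ q = a * c * (1 - z) / 2 := by
  set u := exp (arg p * I)
  set v := exp (arg q * I)
  have hu : u ∈ unitary ℂ := mem_unitary_iff_norm_eq_one.2 (norm_exp_ofReal_mul_I _)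
  have hv : v ∈ unitary ℂ := mem_unitary_iff_norm_eq_one.2 (norm_exp_ofReal_mul_I _)
  have hI : I ∈ unitary ℂ := mem_unitary_iff_norm_eq_one.2 norm_I
  have hp : p = ‖p‖ * u := (norm_mul_exp_arg_mul_I p).symm
  have hq : q = ‖q‖ * v := (norm_mul_exp_arg_mul_I q).symm
  set w : ℂ := ‖p‖ + ‖q‖ * I with hw_def
  have hw_star : star w = ‖p‖ - ‖q‖ * I := by simp [w, sub_eq_add_neg]
  have hre : w + star w = 2 * ‖p‖ := by rw [hw_star, hw_def]; ring
  have him : w - star w = 2 * ‖q‖ * I := by rw [hw_star, hw_def]; ring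
  have hww : star w * w = 1 := by
    simp only [star_def, conj_mul'] at hpq
    rw [hw_star, hw_def]
    linear_combination hpq - (‖q‖ : ℂ) ^ 2 * I_sq
  have huu := Unitary.star_mul_self_of_mem hu
  have hw : w ∈ unitary ℂ := Unitary.mem_iff_star_mul_self.2 hww
  refine ⟨u * star w, I * v * star u, w ^ 2, mul_mem hu (Unitary.star_mem hw),
    mul_mem (mul_mem hI hv) (Unitary.star_mem hu), pow_mem hw 2, ?_, ?_⟩
  · linear_combination hp - u / 2 * hre - u * w / 2 * hww
  · linear_combination hq + I * v / 2 * him + I * v * w / 2 * hww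
      - I * v / 2 * star w * (1 - w ^ 2) * huu + ‖q‖ * v * I_sq

noncomputable def unitaryFinTwoParam (a b c z : ℂ) : Matrix (Fin 2) (Fin 2) ℂ :=
  (1 / 2 : ℂ) • !![a * (1 + z), a * c * (1 - z); b * (1 - z), b * c * (1 + z)]

theorem unitaryFinTwoParam_eq {a b c z : ℂ} (ha : a ∈ unitary ℂ) (hc : c ∈ unitary ℂ)
    (hz : z ∈ unitary ℂ) :
    unitaryFinTwoParam a b c z =
      !![a * (1 + z) / 2, a * c * (1 - z) / 2;
        -(a * b * c * z) * star (a * c * (1 - z) / 2), a * b * c * z * star (a * (1 + z) / 2)] := by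
  have haa : conj a * a = 1 := Unitary.star_mul_self_of_mem ha
  have hcc : conj c * c = 1 := Unitary.star_mul_self_of_mem hc
  have hzz : conj z * z = 1 := Unitary.star_mul_self_of_mem hz
  ext i j
  fin_cases i <;> fin_cases j <;>
    simp only [unitaryFinTwoParam, Fin.zero_eta, Fin.mk_one, Fin.isValue, Matrix.smul_apply,
      Matrix.of_apply, Matrix.cons_val', Matrix.cons_val_zero, Matrix.cons_val_one,
      Matrix.cons_val_fin_one, smul_eq_mul, one_div, star_div₀, star_mul', RCLike.star_def, star_add,
      star_sub, star_one, star_ofNat, neg_mul]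
  · ring
  · ring
  · linear_combination b / 2 * (z * conj c * c - conj c * c * conj z * z) * haa
      + b / 2 * (z - conj z * z) * hcc - b / 2 * hzz
  · linear_combination -(b * c / 2) * (z + conj z * z) * haa - b * c / 2 * hzz

theorem unitaryFinTwoParam_mem_unitaryGroup {a b c z : ℂ} (ha : a ∈ unitary ℂ)
    (hb : b ∈ unitary ℂ) (hc : c ∈ unitary ℂ) (hz : z ∈ unitary ℂ) :
    unitaryFinTwoParam a b c z ∈ Matrix.unitaryGroup (Fin 2) ℂ := by
  have haa : conj a * a = 1 := Unitary.star_mul_self_of_mem ha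
  have hcc : conj c * c = 1 := Unitary.star_mul_self_of_mem hc
  have hzz : conj z * z = 1 := Unitary.star_mul_self_of_mem hz
  rw [unitaryFinTwoParam_eq ha hc hz]
  refine Matrix.mem_unitaryGroup_fin_two_iff.2
    ⟨_, _, _, ?_, mul_mem (mul_mem (mul_mem ha hb) hc) hz, rfl⟩
  simp only [star_div₀, star_mul', RCLike.star_def, star_add, star_sub, star_one, star_ofNat]
  linear_combination
    ((1 + conj z) * (1 + z) + conj c * c * (1 - conj z) * (1 - z)) / 4 * haa
      + (1 - conj z) * (1 - z) / 4 * hcc + hzz / 2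

theorem exists_unitaryFinTwoParam_eq {A : Matrix (Fin 2) (Fin 2) ℂ}
    (hA : A ∈ Matrix.unitaryGroup (Fin 2) ℂ) :
    ∃ a b c z : ℂ, a ∈ unitary ℂ ∧ b ∈ unitary ℂ ∧ c ∈ unitary ℂ ∧ z ∈ unitary ℂ ∧
      A = unitaryFinTwoParam a b c z := by
  obtain ⟨p, q, θ, hpq, hθ, rfl⟩ := Matrix.mem_unitaryGroup_fin_two_iff.1 hA
  obtain ⟨a, c, z, ha, hc, hz, rfl, rfl⟩ := exists_mem_unitary_eq_half_mul hpq
  have haa : conj a * a = 1 := Unitary.star_mul_self_of_mem ha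
  have hcc : conj c * c = 1 := Unitary.star_mul_self_of_mem hc
  have hzz : conj z * z = 1 := Unitary.star_mul_self_of_mem hz
  set b := θ * conj a * conj c * conj z
  have hb : b ∈ unitary ℂ :=
    mul_mem (mul_mem (mul_mem hθ (Unitary.star_mem ha)) (Unitary.star_mem hc)) (Unitary.star_mem hz)
  have hθ_eq : a * b * c * z = θ := by
    linear_combination θ * (conj c * c * conj z * z * haa + conj z * z * hcc + hzz)
  refine ⟨a, b, c, z, ha, hb, hc, hz, ?_⟩
  rw [unitaryFinTwoParam_eq ha hc hz, hθ_eq]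

/-- A 2×2 complex matrix is unitary iff it is of the form
`(1/2)·[[a(1+z), ac(1−z)], [b(1−z), bc(1+z)]]` for unimodular `a, b, c, z`. -/
theorem u2_parametrization (A : Matrix (Fin 2) (Fin 2) ℂ) :
    A ∈ Matrix.unitaryGroup (Fin 2) ℂ ↔
      ∃ a b c z : ℂ, ‖a‖ = 1 ∧ ‖b‖ = 1 ∧ ‖c‖ = 1 ∧
        ‖z‖ = 1 ∧
        A = (1 / 2 : ℂ) • !![a * (1 + z), a * c * (1 - z);
                             b * (1 - z), b * c * (1 + z)] := by
  simp only [← Complex.mem_unitary_iff_norm_eq_one]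
  refine ⟨exists_unitaryFinTwoParam_eq, ?_⟩
  rintro ⟨a, b, c, z, ha, hb, hc, hz, rfl⟩
  exact unitaryFinTwoParam_mem_unitaryGroup ha hb hc hz
end

section
/- Let n ≥ 1, let A be an n×n unitary matrix over ℂ, and let u, w ∈ ℂⁿ be such that every nonzero entry of each of the vectors u, w, Au, Aw has modulus 1, the supports of u and w are disjoint with supp(u) ∪ supp(w) = {1,…,n}, and the supports of Au and Aw are disjoint with supp(Au) ∪ supp(Aw) = {1,…,n}. Then for every z ∈ ℂ with |z| = 1, the vector u + z·w is a biunimodular vector for A. -/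
section ComplementarySupports

variable {𝕜 : Type*} [NormedDivisionRing 𝕜]

theorem norm_add_mul_eq_one_of_complementary {a b z : 𝕜}
    (ha : a ≠ 0 → ‖a‖ = 1) (hb : b ≠ 0 → ‖b‖ = 1)
    (hdisj : ¬(a ≠ 0 ∧ b ≠ 0)) (hcover : a ≠ 0 ∨ b ≠ 0) (hz : ‖z‖ = 1) :
    ‖a + z * b‖ = 1 := by
  rcases hcover with ha0 | hb0
  · have hb0 : b = 0 := by_contra fun hb0 => hdisj ⟨ha0, hb0⟩
    simp [hb0, ha ha0]
  · have ha0 : a = 0 := by_contra fun ha0 => hdisj ⟨ha0, hb0⟩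
    simp [ha0, norm_mul, hz, hb hb0]

theorem norm_add_smul_apply_eq_one_of_complementary {ι : Type*} {x y : ι → 𝕜} {z : 𝕜}
    (hx : ∀ k, x k ≠ 0 → ‖x k‖ = 1) (hy : ∀ k, y k ≠ 0 → ‖y k‖ = 1)
    (hdisj : ∀ k, ¬(x k ≠ 0 ∧ y k ≠ 0)) (hcover : ∀ k, x k ≠ 0 ∨ y k ≠ 0)
    (hz : ‖z‖ = 1) (k : ι) :
    ‖(x + z • y) k‖ = 1 :=
  norm_add_mul_eq_one_of_complementary (hx k) (hy k) (hdisj k) (hcover k) hz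

end ComplementarySupports

theorem biunimodular_of_complementary_supports_general
    (n : ℕ) (A : Matrix (Fin n) (Fin n) ℂ)
    (u w : Fin n → ℂ)
    (hu : ∀ k, u k ≠ 0 → ‖u k‖ = 1)
    (hw : ∀ k, w k ≠ 0 → ‖w k‖ = 1)
    (hAu : ∀ k, A.mulVec u k ≠ 0 → ‖A.mulVec u k‖ = 1)
    (hAw : ∀ k, A.mulVec w k ≠ 0 → ‖A.mulVec w k‖ = 1)
    (hdisj : ∀ k, ¬(u k ≠ 0 ∧ w k ≠ 0))
    (hcover : ∀ k, u k ≠ 0 ∨ w k ≠ 0)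
    (hdisj' : ∀ k, ¬(A.mulVec u k ≠ 0 ∧ A.mulVec w k ≠ 0))
    (hcover' : ∀ k, A.mulVec u k ≠ 0 ∨ A.mulVec w k ≠ 0) :
    ∀ z : ℂ, ‖z‖ = 1 → IsBiunimodular A (u + z • w) := by
  intro z hz
  refine ⟨norm_add_smul_apply_eq_one_of_complementary hu hw hdisj hcover hz, fun k => ?_⟩
  rw [Matrix.mulVec_add, Matrix.mulVec_smul]
  exact norm_add_smul_apply_eq_one_of_complementary hAu hAw hdisj' hcover' hz k

/-- If `u, w, Au, Aw` are unimodular on their supports, the supports of `u` and `w`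
are disjoint and cover everything, and likewise for `Au` and `Aw`, then `u + z·w`
is biunimodular for every unimodular `z`. -/
theorem biunimodular_of_complementary_supports
    (n : ℕ) (hn : 1 ≤ n) (A : Matrix (Fin n) (Fin n) ℂ)
    (hA : A ∈ Matrix.unitaryGroup (Fin n) ℂ) (u w : Fin n → ℂ)
    (hu : ∀ k, u k ≠ 0 → ‖u k‖ = 1)
    (hw : ∀ k, w k ≠ 0 → ‖w k‖ = 1)
    (hAu : ∀ k, A.mulVec u k ≠ 0 → ‖A.mulVec u k‖ = 1)
    (hAw : ∀ k, A.mulVec w k ≠ 0 → ‖A.mulVec w k‖ = 1)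
    (hdisj : ∀ k, ¬(u k ≠ 0 ∧ w k ≠ 0))
    (hcover : ∀ k, u k ≠ 0 ∨ w k ≠ 0)
    (hdisj' : ∀ k, ¬(A.mulVec u k ≠ 0 ∧ A.mulVec w k ≠ 0))
    (hcover' : ∀ k, A.mulVec u k ≠ 0 ∨ A.mulVec w k ≠ 0) :
    ∀ z : ℂ, ‖z‖ = 1 → IsBiunimodular A (u + z • w) :=
  biunimodular_of_complementary_supports_general n A u w hu hw hAu hAw hdisj hcover hdisj' hcover'
end

section
/- Let n ≥ 1 and let 𝓑ₙ denote the set of n×n unitary matrices A that possess a biunimodular vector. Then 𝓑ₙ equals the set of products D₁·S·D₂ with D₁ a unitary diagonal matrix, S a unitary matrix with S·𝟏 = 𝟏, and D₂ a unitary diagonal matrix whose first diagonal entry is 1; in particular, 𝓑ₙ is a closed and path-connected subset of the unitary group U(n). -/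
/-- The set of unitary `n×n` matrices possessing a biunimodular vector, as a subset
of the unitary group `U(n)`. -/
def biuniSet (n : ℕ) : Set (Matrix.unitaryGroup (Fin n) ℂ) :=
  {A | ∃ v : Fin n → ℂ, (∀ k, ‖v k‖ = 1) ∧
    ∀ k, ‖(A : Matrix (Fin n) (Fin n) ℂ).mulVec v k‖ = 1}

/-!
If `v` and `A v` are unimodular, then `diag(A v)⁻¹ A diag(v)` fixes `𝟏`; conversely `D₁ S D₂`
maps the unimodular vector `D₂⁻¹ 𝟏` to `D₁ 𝟏`, and rescaling by the constant `v₀` makes the first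
entry of `D₂` equal to `1`. So, writing `𝕋ⁿ` for the diagonal unitaries, `𝓑ₙ` is the image of
`𝕋ⁿ × Stab(𝟏) × 𝕋ⁿ` under `(D₁, S, D₂) ↦ D₁ S D₂`, and it is the projection to `U(n)` of a closed
subset of `U(n) × 𝕋ⁿ × 𝕋ⁿ`; compactness of `𝕋ⁿ` makes it closed.

Path-connectedness reduces to the stabilizer of a nonzero vector `v` in `U(n)`. A unitary `R`
fixing `v` without eigenvalue `-1` is joined to `1` inside the stabilizer by the Cayley path
`t ↦ ((1 - t) + (1 + t) R) ((1 + t) + (1 - t) R)⁻¹`. A general `S` is `T (T⁻¹ S)`, where `T` is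
the identity on `v` and multiplication by `z` on `v⊥`, for a `z` on the circle such that `-z` is not
an eigenvalue of `S`: then neither `T` nor `T⁻¹ S` has eigenvalue `-1`.
-/

open Matrix
open scoped ComplexOrder

lemma Circle.star_coe_mul_coe (z : Circle) : star (z : ℂ) * z = 1 := by
  rw [Complex.star_def, ← Circle.coe_inv_eq_conj, ← Circle.coe_mul, inv_mul_cancel, Circle.coe_one]

lemma Circle.exists_comp_coe_eq {ι : Type*} {v : ι → ℂ} (hv : ∀ i, ‖v i‖ = 1) :
    ∃ e : ι → Circle, (fun i => (e i : ℂ)) = v :=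
  ⟨fun i => ⟨v i, mem_sphere_zero_iff_norm.mpr (hv i)⟩, rfl⟩

instance : PathConnectedSpace Circle :=
  isPathConnected_iff_pathConnectedSpace.mp
    (isPathConnected_sphere (by rw [Complex.rank_real_complex]; norm_num) (0 : ℂ) zero_le_one)

lemma Circle.exists_neg_coe_notMem {s : Set ℂ} (hs : s.Finite) : ∃ z : Circle, -(z : ℂ) ∉ s := by
  have : Nontrivial Circle := ⟨⟨-1, 1, Circle.neg_ne_self 1⟩⟩
  have : Infinite Circle := PreconnectedSpace.infinite
  have hinj : Function.Injective fun z : Circle => -(z : ℂ) :=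
    neg_injective.comp Circle.coe_injective
  exact Set.Finite.exists_notMem (α := Circle) (hs.preimage hinj.injOn)

namespace Matrix

variable {ι : Type*} [Fintype ι]

noncomputable def lineProjection (v : ι → ℂ) : Matrix ι ι ℂ :=
  (star v ⬝ᵥ v)⁻¹ • vecMulVec v (star v)

lemma lineProjection_mulVec (v u : ι → ℂ) :
    lineProjection v *ᵥ u = ((star v ⬝ᵥ u) / (star v ⬝ᵥ v)) • v := by
  rw [lineProjection, smul_mulVec, vecMulVec_mulVec, op_smul_eq_smul, smul_smul, inv_mul_eq_div]

lemma conjTranspose_lineProjection (v : ι → ℂ) : (lineProjection v)ᴴ = lineProjection v := by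
  rw [lineProjection, conjTranspose_smul, conjTranspose_vecMulVec, star_star, star_inv₀,
    ← star_dotProduct_star, star_star]

lemma lineProjection_mul_self {v : ι → ℂ} (hv : v ≠ 0) :
    lineProjection v * lineProjection v = lineProjection v := by
  have hvv : star v ⬝ᵥ v ≠ 0 := dotProduct_star_self_eq_zero.not.mpr hv
  rw [lineProjection, smul_mul_smul_comm, vecMulVec_mul_vecMulVec, vecMulVec_smul, smul_smul,
    mul_assoc, inv_mul_cancel₀ hvv, mul_one]

variable [DecidableEq ι]

lemma isUnit_of_mulVec_eq_zero {M : Matrix ι ι ℂ} (h : ∀ u, M *ᵥ u = 0 → u = 0) : IsUnit M :=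
  mulVec_injective_iff_isUnit.mp fun x y hxy =>
    sub_eq_zero.mp (h _ (by rw [mulVec_sub, hxy, sub_self]))

lemma star_mulVec_dotProduct_mulVec_of_mem_unitaryGroup {U : Matrix ι ι ℂ}
    (hU : U ∈ unitaryGroup ι ℂ) (u : ι → ℂ) :
    star (U *ᵥ u) ⬝ᵥ (U *ᵥ u) = star u ⬝ᵥ u := by
  rw [star_mulVec, dotProduct_mulVec, vecMul_vecMul, ← star_eq_conjTranspose,
    mem_unitaryGroup_iff'.mp hU, vecMul_one]

lemma star_mulVec_eq_of_mulVec_eq {U : Matrix ι ι ℂ} (hU : U ∈ unitaryGroup ι ℂ) {v : ι → ℂ}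
    (hv : U *ᵥ v = v) : star U *ᵥ v = v := by
  conv_lhs => rw [← hv]
  rw [mulVec_mulVec, mem_unitaryGroup_iff'.mp hU, one_mulVec]

lemma mul_nonsing_inv_mem_unitaryGroup {A B : Matrix ι ι ℂ} (hB : IsUnit B)
    (hAB : Aᴴ * A = Bᴴ * B) : A * B⁻¹ ∈ unitaryGroup ι ℂ := by
  have hB' : IsUnit Bᴴ.det := by
    simpa [det_conjTranspose] using ((isUnit_iff_isUnit_det B).mp hB).star
  rw [mem_unitaryGroup_iff', star_eq_conjTranspose, conjTranspose_mul,
    conjTranspose_nonsing_inv]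
  calc Bᴴ⁻¹ * Aᴴ * (A * B⁻¹) = Bᴴ⁻¹ * (Aᴴ * A) * B⁻¹ := by simp only [Matrix.mul_assoc]
    _ = 1 := by rw [hAB, Matrix.mul_assoc, Matrix.mul_assoc,
      mul_nonsing_inv _ ((isUnit_iff_isUnit_det B).mp hB), Matrix.mul_one, nonsing_inv_mul _ hB']

def unitaryStabilizer (v : ι → ℂ) : Subgroup (unitaryGroup ι ℂ) where
  carrier := {U | (U : Matrix ι ι ℂ) *ᵥ v = v}
  mul_mem' {U V} hU hV := by
    change _ *ᵥ v = v at hU hV ⊢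
    rw [UnitaryGroup.mul_val, ← mulVec_mulVec, hV, hU]
  one_mem' := one_mulVec v
  inv_mem' {U} hU := star_mulVec_eq_of_mulVec_eq U.2 hU

lemma mem_unitaryStabilizer {v : ι → ℂ} {U : unitaryGroup ι ℂ} :
    U ∈ unitaryStabilizer v ↔ (U : Matrix ι ι ℂ) *ᵥ v = v := Iff.rfl

lemma star_dotProduct_mulVec_of_mem_unitaryStabilizer {v : ι → ℂ} {S : unitaryGroup ι ℂ}
    (hS : S ∈ unitaryStabilizer v) (u : ι → ℂ) :
    star v ⬝ᵥ ((S : Matrix ι ι ℂ) *ᵥ u) = star v ⬝ᵥ u := by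
  rw [dotProduct_mulVec, ← conjTranspose_conjTranspose (S : Matrix ι ι ℂ), ← star_mulVec,
    ← star_eq_conjTranspose, star_mulVec_eq_of_mulVec_eq S.2 hS]

noncomputable def cayleyFactor (R : Matrix ι ι ℂ) (t : ℝ) : Matrix ι ι ℂ :=
  (1 + t) • 1 + (1 - t) • R

lemma isUnit_cayleyFactor {R : Matrix ι ι ℂ} (hR : R ∈ unitaryGroup ι ℂ) (h : IsUnit (1 + R))
    (t : ℝ) : IsUnit (cayleyFactor R t) := by
  rcases eq_or_ne t 0 with rfl | ht
  · simpa [cayleyFactor] using h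
  refine isUnit_of_mulVec_eq_zero fun u hu => ?_
  have hRu : (1 - t) • (R *ᵥ u) = -((1 + t) • u) := by
    rw [cayleyFactor, add_mulVec, smul_mulVec, smul_mulVec, one_mulVec] at hu
    exact eq_neg_of_add_eq_zero_right hu
  -- `R` preserves `star u ⬝ᵥ u`, so `(1 - t)² = (1 + t)²` unless `u = 0`
  have hsq := congrArg (fun w => star w ⬝ᵥ w) hRu
  simp only [star_smul, star_neg, star_trivial, smul_dotProduct, dotProduct_smul, neg_dotProduct,
    dotProduct_neg, smul_neg, neg_neg, star_mulVec_dotProduct_mulVec_of_mem_unitaryGroup hR,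
    smul_smul] at hsq
  have h4t : (4 * t) • (star u ⬝ᵥ u) = 0 := by
    rw [show 4 * t = (1 + t) * (1 + t) - (1 - t) * (1 - t) by ring, sub_smul, ← hsq, sub_self]
  exact dotProduct_star_self_eq_zero.mp ((smul_eq_zero.mp h4t).resolve_left
    (mul_ne_zero four_ne_zero ht))

lemma conjTranspose_mul_cayleyFactor_neg {R : Matrix ι ι ℂ} (hR : R ∈ unitaryGroup ι ℂ) (t : ℝ) :
    (cayleyFactor R (-t))ᴴ * cayleyFactor R (-t) = (cayleyFactor R t)ᴴ * cayleyFactor R t := by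
  have hRR : Rᴴ * R = 1 := mem_unitaryGroup_iff'.mp hR
  simp only [cayleyFactor, conjTranspose_add, conjTranspose_smul, star_trivial, conjTranspose_one]
  simp only [Matrix.add_mul, Matrix.mul_add, smul_mul_assoc, mul_smul_comm, Matrix.one_mul,
    Matrix.mul_one, hRR]
  module

lemma cayleyFactor_mulVec {R : Matrix ι ι ℂ} {v : ι → ℂ} (hv : R *ᵥ v = v) (t : ℝ) :
    cayleyFactor R t *ᵥ v = (2 : ℝ) • v := by
  rw [cayleyFactor, add_mulVec, smul_mulVec, smul_mulVec, one_mulVec, hv, ← add_smul]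
  norm_num

lemma cayleyFactor_neg_mul_inv_mulVec {R : Matrix ι ι ℂ} {v : ι → ℂ} (hv : R *ᵥ v = v) {t : ℝ}
    (ht : IsUnit (cayleyFactor R t)) : (cayleyFactor R (-t) * (cayleyFactor R t)⁻¹) *ᵥ v = v := by
  have half (s : ℝ) : cayleyFactor R s *ᵥ ((2 : ℝ)⁻¹ • v) = v := by
    rw [mulVec_smul, cayleyFactor_mulVec hv, smul_smul, inv_mul_cancel₀ two_ne_zero, one_smul]
  have hinv : (cayleyFactor R t)⁻¹ *ᵥ v = (2 : ℝ)⁻¹ • v := by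
    conv_lhs => rw [← half t, mulVec_mulVec, nonsing_inv_mul _ ((isUnit_iff_isUnit_det _).mp ht),
      one_mulVec]
  rw [← mulVec_mulVec, hinv, half]

lemma joinedIn_one_of_isUnit_one_add {v : ι → ℂ} {U : unitaryGroup ι ℂ}
    (hU : U ∈ unitaryStabilizer v) (h : IsUnit (1 + (U : Matrix ι ι ℂ))) :
    JoinedIn (unitaryStabilizer v) 1 U := by
  set F := cayleyFactor (U : Matrix ι ι ℂ)
  have hF (t : ℝ) : IsUnit (F t) := isUnit_cayleyFactor U.2 h t
  let γ (t : ℝ) : unitaryGroup ι ℂ := ⟨F (-t) * (F t)⁻¹,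
    mul_nonsing_inv_mem_unitaryGroup (hF t) (conjTranspose_mul_cayleyFactor_neg U.2 t)⟩
  have hFc : Continuous F := by unfold F cayleyFactor; fun_prop
  have hγ : Continuous γ := by
    refine Continuous.subtype_mk ((hFc.comp continuous_neg).mul ?_) _
    refine continuous_iff_continuousAt.mpr fun t =>
      (continuousAt_matrix_inv _ ?_).comp hFc.continuousAt
    rw [Ring.inverse_eq_inv']
    exact continuousAt_inv₀ ((isUnit_iff_isUnit_det _).mp (hF t)).ne_zero
  refine JoinedIn.ofLine hγ.continuousOn ?_ ?_ ?_
  · apply Subtype.ext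
    simp only [γ, neg_zero, UnitaryGroup.one_val]
    exact mul_nonsing_inv _ ((isUnit_iff_isUnit_det _).mp (hF 0))
  · apply Subtype.ext
    have h1 : F 1 = (2 : ℝ) • 1 := by simp only [F, cayleyFactor]; norm_num
    have hm1 : F (-1) = (2 : ℝ) • (U : Matrix ι ι ℂ) := by simp only [F, cayleyFactor]; norm_num
    have hinv : ((2 : ℝ) • (1 : Matrix ι ι ℂ))⁻¹ = (2 : ℝ)⁻¹ • 1 :=
      inv_eq_left_inv (by rw [smul_mul_smul_comm, inv_mul_cancel₀ two_ne_zero, one_smul, one_mul])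
    simp only [γ, h1, hm1, hinv, smul_mul_smul_comm, Matrix.mul_one]
    rw [mul_inv_cancel₀ (two_ne_zero (α := ℝ)), one_smul]
  · rintro _ ⟨t, -, rfl⟩
    exact cayleyFactor_neg_mul_inv_mulVec hU (hF t)

noncomputable def lineRotation (v : ι → ℂ) (z : ℂ) : Matrix ι ι ℂ :=
  z • 1 + (1 - z) • lineProjection v

lemma lineRotation_mem_unitaryGroup {v : ι → ℂ} (hv : v ≠ 0) (z : Circle) :
    lineRotation v z ∈ unitaryGroup ι ℂ := by
  have hz := Circle.star_coe_mul_coe z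
  rw [mem_unitaryGroup_iff', star_eq_conjTranspose, lineRotation, conjTranspose_add,
    conjTranspose_smul, conjTranspose_smul, conjTranspose_one, conjTranspose_lineProjection]
  simp only [Matrix.add_mul, Matrix.mul_add, smul_mul_assoc, mul_smul_comm, Matrix.one_mul,
    Matrix.mul_one, lineProjection_mul_self hv, star_sub, star_one]
  match_scalars
  · linear_combination hz
  · linear_combination -hz

lemma lineRotation_mulVec_self {v : ι → ℂ} (hv : v ≠ 0) (z : ℂ) : lineRotation v z *ᵥ v = v := by
  have hvv : star v ⬝ᵥ v ≠ 0 := dotProduct_star_self_eq_zero.not.mpr hv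
  rw [lineRotation, add_mulVec, smul_mulVec, smul_mulVec, one_mulVec, lineProjection_mulVec,
    div_self hvv, one_smul, ← add_smul, add_sub_cancel, one_smul]

lemma star_dotProduct_lineRotation_mulVec {v : ι → ℂ} (hv : v ≠ 0) (z : ℂ) (u : ι → ℂ) :
    star v ⬝ᵥ (lineRotation v z *ᵥ u) = star v ⬝ᵥ u := by
  have hvv : star v ⬝ᵥ v ≠ 0 := dotProduct_star_self_eq_zero.not.mpr hv
  rw [lineRotation, add_mulVec, smul_mulVec, smul_mulVec, one_mulVec, lineProjection_mulVec,
    dotProduct_add, dotProduct_smul, dotProduct_smul, dotProduct_smul, smul_eq_mul, smul_eq_mul,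
    smul_eq_mul, div_mul_cancel₀ _ hvv]
  ring

lemma isUnit_add_lineRotation {v : ι → ℂ} (hv : v ≠ 0) {S : unitaryGroup ι ℂ}
    (hS : S ∈ unitaryStabilizer v) {z : ℂ}
    (hz : ¬ Module.End.HasEigenvalue (toLin' (S : Matrix ι ι ℂ)) (-z)) :
    IsUnit ((S : Matrix ι ι ℂ) + lineRotation v z) := by
  refine isUnit_of_mulVec_eq_zero fun u hu => ?_
  rw [add_mulVec] at hu
  -- both summands preserve `star v ⬝ᵥ ·`, so `u ⟂ v`, where the rotation acts as `z`
  have hvu : star v ⬝ᵥ u = 0 := by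
    have h := congrArg (star v ⬝ᵥ ·) hu
    rw [dotProduct_add, star_dotProduct_mulVec_of_mem_unitaryStabilizer hS,
      star_dotProduct_lineRotation_mulVec hv, dotProduct_zero, ← two_mul] at h
    exact (mul_eq_zero.mp h).resolve_left two_ne_zero
  have hSu : (S : Matrix ι ι ℂ) *ᵥ u = -z • u := by
    rw [lineRotation, add_mulVec, smul_mulVec, smul_mulVec, one_mulVec, lineProjection_mulVec, hvu,
      zero_div, zero_smul, smul_zero, add_zero] at hu
    rw [eq_neg_of_add_eq_zero_left hu, neg_smul]
  by_contra hu0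
  exact hz (Module.End.hasEigenvalue_of_hasEigenvector
    ⟨Module.End.mem_eigenspace_iff.mpr (by rw [toLin'_apply, hSu]), hu0⟩)

lemma joinedIn_one_of_mem_unitaryStabilizer {v : ι → ℂ} (hv : v ≠ 0) {S : unitaryGroup ι ℂ}
    (hS : S ∈ unitaryStabilizer v) : JoinedIn (unitaryStabilizer v) 1 S := by
  obtain ⟨z, hz⟩ := Circle.exists_neg_coe_notMem
    ((Module.End.finite_hasEigenvalue (toLin' (S : Matrix ι ι ℂ))).union
      (Module.End.finite_hasEigenvalue (toLin' (1 : Matrix ι ι ℂ))))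
  simp only [Set.mem_union, Set.mem_ofPred_eq, not_or] at hz
  let T : unitaryGroup ι ℂ := ⟨lineRotation v z, lineRotation_mem_unitaryGroup hv z⟩
  have hT : T ∈ unitaryStabilizer v := lineRotation_mulVec_self hv z
  have hT₁ : JoinedIn (unitaryStabilizer v) 1 T := by
    refine joinedIn_one_of_isUnit_one_add hT ?_
    simpa using isUnit_add_lineRotation hv (one_mem _) hz.2
  have hT₂ : JoinedIn (unitaryStabilizer v) 1 (T⁻¹ * S) := by
    refine joinedIn_one_of_isUnit_one_add (mul_mem (inv_mem hT) hS) ?_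
    have h : (1 : Matrix ι ι ℂ) + ((T⁻¹ * S : unitaryGroup ι ℂ) : Matrix ι ι ℂ) =
        star (T : Matrix ι ι ℂ) * ((S : Matrix ι ι ℂ) + T) := by
      rw [UnitaryGroup.mul_val, UnitaryGroup.inv_val, Matrix.mul_add, add_comm,
        UnitaryGroup.star_mul_self]
    rw [h]
    exact (Unitary.isUnit_coe (U := T)).star.mul (isUnit_add_lineRotation hv hS hz.1)
  simpa [coe_mul_coe] using hT₁.mul hT₂

lemma isPathConnected_unitaryStabilizer {v : ι → ℂ} (hv : v ≠ 0) :
    IsPathConnected (unitaryStabilizer v : Set (unitaryGroup ι ℂ)) :=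
  ⟨1, one_mem _, fun {_} hS => joinedIn_one_of_mem_unitaryStabilizer hv hS⟩

noncomputable def diagonalUnitary : (ι → Circle) →* unitaryGroup ι ℂ where
  toFun d := ⟨diagonal fun i => (d i : ℂ), by
    rw [mem_unitaryGroup_iff', star_eq_conjTranspose, diagonal_conjTranspose, diagonal_mul_diagonal]
    simp only [Pi.star_apply, Circle.star_coe_mul_coe, diagonal_one]⟩
  map_one' := Subtype.ext (by simp)
  map_mul' d₁ d₂ := Subtype.ext (by simp)

@[simp]
lemma coe_diagonalUnitary (d : ι → Circle) :
    (diagonalUnitary d : Matrix ι ι ℂ) = diagonal fun i => (d i : ℂ) := rfl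

lemma diagonalUnitary_mulVec (d : ι → Circle) (u : ι → ℂ) :
    (diagonalUnitary d : Matrix ι ι ℂ) *ᵥ u = fun i => d i * u i := by
  rw [coe_diagonalUnitary]
  funext i
  exact mulVec_diagonal _ _ i

@[fun_prop]
lemma continuous_diagonalUnitary :
    Continuous (diagonalUnitary : (ι → Circle) → unitaryGroup ι ℂ) :=
  Continuous.subtype_mk (Continuous.matrix_diagonal (by fun_prop)) _

lemma IsDiag.exists_eq_diagonalUnitary {D : unitaryGroup ι ℂ} (hD : (D : Matrix ι ι ℂ).IsDiag) :
    ∃ d : ι → Circle, D = diagonalUnitary d := by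
  have hnorm (i : ι) : ‖(D : Matrix ι ι ℂ) i i‖ = 1 := by
    have h := congrFun₂ (mem_unitaryGroup_iff'.mp D.2) i i
    rw [← hD.diagonal_diag, star_eq_conjTranspose, diagonal_conjTranspose, diagonal_mul_diagonal,
      diagonal_apply_eq, one_apply_eq, Pi.star_apply, Complex.star_def, Complex.conj_mul'] at h
    exact (pow_eq_one_iff_of_nonneg (norm_nonneg _) two_ne_zero).mp (by exact_mod_cast h)
  exact ⟨fun i => ⟨_, mem_sphere_zero_iff_norm.mpr (hnorm i)⟩, Subtype.ext hD.diagonal_diag.symm⟩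

end Matrix

variable {n : ℕ}

lemma mem_biuniSet_iff {A : unitaryGroup (Fin n) ℂ} :
    A ∈ biuniSet n ↔ ∃ e f : Fin n → Circle,
      (A : Matrix (Fin n) (Fin n) ℂ) *ᵥ (fun i => (e i : ℂ)) = fun i => (f i : ℂ) := by
  constructor
  · rintro ⟨v, hv, hAv⟩
    obtain ⟨e, rfl⟩ := Circle.exists_comp_coe_eq hv
    obtain ⟨f, hf⟩ := Circle.exists_comp_coe_eq hAv
    exact ⟨e, f, hf.symm⟩
  · rintro ⟨e, f, h⟩
    exact ⟨_, fun i => Circle.norm_coe (e i), by simp [h, Circle.norm_coe]⟩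

lemma isClosed_biuniSet : IsClosed (biuniSet n) := by
  have h : biuniSet n = Prod.fst ''
      {p : unitaryGroup (Fin n) ℂ × (Fin n → Circle) × (Fin n → Circle) |
        (p.1 : Matrix (Fin n) (Fin n) ℂ) *ᵥ (fun i => (p.2.1 i : ℂ)) = fun i => (p.2.2 i : ℂ)} := by
    ext A
    simp [mem_biuniSet_iff]
  rw [h]
  exact isClosedMap_fst_of_compactSpace _ (isClosed_eq (by fun_prop) (by fun_prop))

lemma diagonalUnitary_mul_mul_mem_biuniSet (d₁ d₂ : Fin n → Circle) {S : unitaryGroup (Fin n) ℂ}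
    (hS : S ∈ unitaryStabilizer 1) : diagonalUnitary d₁ * S * diagonalUnitary d₂ ∈ biuniSet n := by
  refine mem_biuniSet_iff.mpr ⟨d₂⁻¹, d₁, ?_⟩
  have hd₂ : (diagonalUnitary d₂ : Matrix (Fin n) (Fin n) ℂ) *ᵥ (fun i => ((d₂⁻¹) i : ℂ)) = 1 := by
    rw [diagonalUnitary_mulVec]
    funext i
    simp
  rw [UnitaryGroup.mul_val, UnitaryGroup.mul_val, ← mulVec_mulVec, ← mulVec_mulVec, hd₂,
    mem_unitaryStabilizer.mp hS, diagonalUnitary_mulVec]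
  simp

lemma exists_eq_diagonalUnitary_mul_mul {A : unitaryGroup (Fin n) ℂ} (hA : A ∈ biuniSet n)
    (i₀ : Fin n) : ∃ d₁ S d₂, S ∈ unitaryStabilizer 1 ∧ d₂ i₀ = 1 ∧
      A = diagonalUnitary d₁ * S * diagonalUnitary d₂ := by
  obtain ⟨e, f, hAef⟩ := mem_biuniSet_iff.mp hA
  set d₁ : Fin n → Circle := fun k => f k * (e i₀)⁻¹
  set d₂ : Fin n → Circle := fun k => e i₀ * (e k)⁻¹
  refine ⟨d₁, (diagonalUnitary d₁)⁻¹ * A * (diagonalUnitary d₂)⁻¹, d₂, ?_, mul_inv_cancel _,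
    by group⟩
  have hd₂ : (diagonalUnitary d₂⁻¹ : Matrix (Fin n) (Fin n) ℂ) *ᵥ 1 =
      (e i₀ : ℂ)⁻¹ • fun i => (e i : ℂ) := by
    rw [diagonalUnitary_mulVec]
    funext k
    simp [d₂, mul_comm]
  rw [mem_unitaryStabilizer, ← map_inv, ← map_inv, UnitaryGroup.mul_val, UnitaryGroup.mul_val,
    ← mulVec_mulVec, ← mulVec_mulVec, hd₂, mulVec_smul, hAef, diagonalUnitary_mulVec]
  funext k
  simp only [Pi.inv_apply, _root_.mul_inv_rev, inv_inv, Circle.coe_mul, Circle.coe_inv, Pi.smul_apply,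
    smul_eq_mul, Pi.one_apply, d₁]
  field_simp

lemma biuniSet_eq_range [NeZero n] : biuniSet n = Set.range fun
    p : (Fin n → Circle) × unitaryStabilizer (1 : Fin n → ℂ) × (Fin n → Circle) =>
      diagonalUnitary p.1 * p.2.1 * diagonalUnitary p.2.2 := by
  ext A
  constructor
  · intro hA
    obtain ⟨d₁, S, d₂, hS, -, rfl⟩ := exists_eq_diagonalUnitary_mul_mul hA 0
    exact ⟨(d₁, ⟨S, hS⟩, d₂), rfl⟩
  · rintro ⟨⟨d₁, S, d₂⟩, rfl⟩
    exact diagonalUnitary_mul_mul_mem_biuniSet d₁ d₂ S.2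

lemma isPathConnected_biuniSet [NeZero n] : IsPathConnected (biuniSet n) := by
  have : PathConnectedSpace (unitaryStabilizer (1 : Fin n → ℂ)) :=
    isPathConnected_iff_pathConnectedSpace.mp (isPathConnected_unitaryStabilizer one_ne_zero)
  rw [biuniSet_eq_range]
  exact isPathConnected_range (by fun_prop)

/-- `𝓑ₙ` is exactly the set of products `D₁·S·D₂` (with `D₁` unitary diagonal,
`S` unitary fixing the all-ones vector, `D₂` unitary diagonal with first diagonal
entry `1`); in particular it is closed and path-connected in `U(n)`. -/
theorem biuniSet_eq_products_and_closed_pathConnected (n : ℕ) (hn : 1 ≤ n) :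
    biuniSet n =
      {A : Matrix.unitaryGroup (Fin n) ℂ |
        ∃ D₁ S D₂ : Matrix.unitaryGroup (Fin n) ℂ,
          (D₁ : Matrix (Fin n) (Fin n) ℂ).IsDiag ∧
          (S : Matrix (Fin n) (Fin n) ℂ).mulVec (fun _ => 1) = (fun _ => 1) ∧
          (D₂ : Matrix (Fin n) (Fin n) ℂ).IsDiag ∧
          (D₂ : Matrix (Fin n) (Fin n) ℂ) ⟨0, hn⟩ ⟨0, hn⟩ = 1 ∧
          A = D₁ * S * D₂} ∧
    IsClosed (biuniSet n) ∧ IsPathConnected (biuniSet n) := by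
  have : NeZero n := NeZero.of_pos hn
  refine ⟨Set.ext fun A => ⟨fun hA => ?_, ?_⟩, isClosed_biuniSet, isPathConnected_biuniSet⟩
  · obtain ⟨d₁, S, d₂, hS, hd₂, rfl⟩ := exists_eq_diagonalUnitary_mul_mul hA 0
    exact ⟨_, S, _, isDiag_diagonal _, hS, isDiag_diagonal _, by simp [hd₂], rfl⟩
  · rintro ⟨D₁, S, D₂, hD₁, hS, hD₂, -, rfl⟩
    obtain ⟨d₁, rfl⟩ := hD₁.exists_eq_diagonalUnitary
    obtain ⟨d₂, rfl⟩ := hD₂.exists_eq_diagonalUnitary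
    exact diagonalUnitary_mul_mul_mem_biuniSet d₁ d₂ hS
end

section
/- Let n ≥ 1 and let 𝓑ₙ denote the set of n×n unitary matrices A that possess a biunimodular vector. Then 𝓑ₙ has nonempty interior in the unitary group U(n) (with the subspace topology of U(n) inside the space of n×n complex matrices). -/
open Matrix Complex Filter Topology

noncomputable section

namespace Biunimodular

variable {ι : Type*}

def phaseVec (θ : ι → ℝ) : ι → ℂ := fun j => exp (θ j * I)

lemma norm_phaseVec (θ : ι → ℝ) (j : ι) : ‖phaseVec θ j‖ = 1 := by
  simp [phaseVec, norm_exp]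

@[simp] lemma phaseVec_zero : phaseVec (0 : ι → ℝ) = 1 := by
  ext
  simp [phaseVec]

variable [Fintype ι]

lemma sum_norm_sq_mulVec_of_mem_unitaryGroup [DecidableEq ι] {A : Matrix ι ι ℂ}
    (hA : A ∈ unitaryGroup ι ℂ) (v : ι → ℂ) :
    ∑ k, ‖(A *ᵥ v) k‖ ^ 2 = ∑ k, ‖v k‖ ^ 2 := by
  have h : star (A *ᵥ v) ⬝ᵥ (A *ᵥ v) = star v ⬝ᵥ v := by
    rw [star_mulVec, ← dotProduct_mulVec, mulVec_mulVec, ← star_eq_conjTranspose,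
      mem_unitaryGroup_iff'.mp hA, one_mulVec]
  simp only [dotProduct, Pi.star_apply, star_def, conj_mul'] at h
  exact_mod_cast h

lemma sub_I_smul_one_sub_mem_unitaryGroup [DecidableEq ι] {P : Matrix ι ι ℂ} (hP : Pᴴ = P)
    (hPP : P * P = P) : P - I • (1 - P) ∈ unitaryGroup ι ℂ := by
  set Q := 1 - P with hQ
  have hPQ : P * Q = 0 := by rw [hQ, mul_sub, mul_one, hPP, sub_self]
  have hQP : Q * P = 0 := by rw [hQ, sub_mul, one_mul, hPP, sub_self]
  have hQQ : Q * Q = Q := by rw [hQ, sub_mul, one_mul, ← hQ, hPQ, sub_zero]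
  have hQH : Qᴴ = Q := by rw [hQ, conjTranspose_sub, conjTranspose_one, hP]
  rw [mem_unitaryGroup_iff, star_eq_conjTranspose, conjTranspose_sub, conjTranspose_smul, hP, hQH,
    star_def, conj_I, neg_smul, sub_neg_eq_add, sub_mul, mul_add, mul_add, smul_mul_assoc,
    mul_smul_comm, smul_mul_smul_comm, hPP, hPQ, hQP, hQQ, I_mul_I]
  simp only [smul_zero, add_zero, zero_add, neg_one_smul, sub_neg_eq_add, hQ, add_sub_cancel]

def onesProj : Matrix ι ι ℂ := of fun _ _ => (Fintype.card ι : ℂ)⁻¹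

lemma conjTranspose_onesProj : (onesProj : Matrix ι ι ℂ)ᴴ = onesProj := by
  ext
  simp [onesProj]

lemma onesProj_mul_self : (onesProj : Matrix ι ι ℂ) * onesProj = onesProj := by
  ext i j
  have : Nonempty ι := ⟨i⟩
  simp [onesProj, mul_apply, Fintype.card_ne_zero]

lemma sum_onesProj_apply (k : ι) : ∑ j, (onesProj : Matrix ι ι ℂ) k j = 1 := by
  have : Nonempty ι := ⟨k⟩
  simp [onesProj, Fintype.card_ne_zero]

lemma hasFDerivAt_mulVec_phaseVec_apply (A : Matrix ι ι ℂ) (k : ι) (θ₀ : ι → ℝ) :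
    HasFDerivAt (fun θ => (A *ᵥ phaseVec θ) k)
      (∑ j, (A k j * (phaseVec θ₀ j * I)) • (ofRealCLM.comp (ContinuousLinearMap.proj j))) θ₀ := by
  refine HasFDerivAt.fun_sum fun j _ => ?_
  have hj : HasFDerivAt (fun θ : ι → ℝ => (θ j : ℂ))
      (ofRealCLM.comp (ContinuousLinearMap.proj j)) θ₀ :=
    (ofRealCLM.comp (ContinuousLinearMap.proj (R := ℝ) (φ := fun _ : ι => ℝ) j)).hasFDerivAt
  simpa only [smul_smul, phaseVec] using ((hj.mul_const I).cexp).const_mul (A k j)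

/-- Matrices enter as `ι → ι → ℂ`, which, unlike `Matrix`, carries a normed-space structure. -/
def phaseEq (p : (ι → ι → ℂ) × (ι → ℝ)) : ι → ℝ :=
  fun k => ‖((p.1 : Matrix ι ι ℂ) *ᵥ phaseVec p.2) k‖ ^ 2 + 2 / Fintype.card ι * ∑ j, p.2 j

lemma contDiff_phaseEq : ContDiff ℝ 1 (phaseEq (ι := ι)) := by
  have : ContDiff ℝ 1 (fun x : ℝ => (x : ℂ)) := ofRealCLM.contDiff
  refine contDiff_pi.2 fun k => (ContDiff.norm_sq ℝ ?_).add (by fun_prop)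
  simp only [mulVec, dotProduct, phaseVec]
  fun_prop

lemma norm_mulVec_phaseVec_eq_one [DecidableEq ι] {A : Matrix ι ι ℂ} (hA : A ∈ unitaryGroup ι ℂ)
    {θ : ι → ℝ} (h : phaseEq (A, θ) = 1) (k : ι) : ‖(A *ᵥ phaseVec θ) k‖ = 1 := by
  set c := 2 / Fintype.card ι * ∑ j, θ j
  have hk : ∀ k, ‖(A *ᵥ phaseVec θ) k‖ ^ 2 = 1 - c := fun k => by
    have := congrFun h k
    simp only [phaseEq, Pi.one_apply] at this
    linarith
  have hsum := sum_norm_sq_mulVec_of_mem_unitaryGroup hA (phaseVec θ)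
  simp only [hk, norm_phaseVec, one_pow, Finset.sum_const, nsmul_eq_mul, Finset.card_univ] at hsum
  have hc : c = 0 := by
    have : Nonempty ι := ⟨k⟩
    have hn : (Fintype.card ι : ℝ) ≠ 0 := Nat.cast_ne_zero.2 Fintype.card_ne_zero
    linarith [mul_left_cancel₀ hn hsum]
  rw [← pow_eq_one_iff_of_nonneg (norm_nonneg _) two_ne_zero, hk, hc, sub_zero]

section BaseMatrix

variable [DecidableEq ι]

def baseMatrix : Matrix ι ι ℂ := onesProj - I • (1 - onesProj)

lemma baseMatrix_mem_unitaryGroup : (baseMatrix : Matrix ι ι ℂ) ∈ unitaryGroup ι ℂ :=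
  sub_I_smul_one_sub_mem_unitaryGroup conjTranspose_onesProj onesProj_mul_self

lemma baseMatrix_mulVec_one : (baseMatrix : Matrix ι ι ℂ) *ᵥ 1 = 1 := by
  ext k
  simp [baseMatrix, mulVec, dotProduct, Finset.sum_sub_distrib, ← Finset.mul_sum,
    sum_onesProj_apply, one_apply]

lemma im_baseMatrix_apply (k j : ι) :
    ((baseMatrix : Matrix ι ι ℂ) k j).im = (Fintype.card ι : ℝ)⁻¹ - if k = j then 1 else 0 := by
  split_ifs with h <;> simp [baseMatrix, onesProj, h]

lemma phaseEq_baseMatrix_zero : phaseEq ((baseMatrix : Matrix ι ι ℂ), (0 : ι → ℝ)) = 1 := by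
  ext k
  simp only [phaseEq, phaseVec_zero, baseMatrix_mulVec_one, norm_one, one_pow,
    Pi.zero_apply, Finset.sum_const_zero, mul_zero, add_zero, Pi.one_apply]

lemma hasFDerivAt_phaseEq_baseMatrix :
    HasFDerivAt (fun θ => phaseEq ((baseMatrix : Matrix ι ι ℂ), θ))
      ((2 : ℝ) • ContinuousLinearMap.id ℝ (ι → ℝ)) 0 := by
  refine hasFDerivAt_pi'' fun k => ?_
  have hsum : HasFDerivAt (fun θ : ι → ℝ => ∑ j, θ j) (∑ j, ContinuousLinearMap.proj j) 0 :=
    HasFDerivAt.fun_sum fun j _ => hasFDerivAt_apply (𝕜 := ℝ) j (0 : ι → ℝ)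
  convert ((hasFDerivAt_mulVec_phaseVec_apply baseMatrix k 0).norm_sq).add
    (hsum.const_mul (2 / Fintype.card ι : ℝ)) using 1
  · rfl
  ext θ
  simp only [ContinuousLinearMap.comp_smulₛₗ, Real.ringHom_apply, ContinuousLinearMap.comp_id,
    _root_.smul_apply, ContinuousLinearMap.proj_apply, smul_eq_mul, phaseVec_zero,
    baseMatrix_mulVec_one, Pi.one_apply, one_mul, _root_.add_apply, ContinuousLinearMap.comp_apply,
    _root_.sum_apply, ofRealCLM_apply, map_sum, coe_innerSL_apply, Complex.inner, map_one, mul_one,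
    mul_re, I_re, mul_zero, im_baseMatrix_apply, I_im, zero_sub, neg_sub, ofReal_re, sub_mul,
    ite_mul, zero_mul, mul_im, add_zero, ofReal_im, sub_zero, Finset.sum_sub_distrib,
    Finset.sum_ite_eq, Finset.mem_univ, ↓reduceIte, ← Finset.mul_sum, nsmul_eq_mul, Nat.cast_ofNat]
  ring

lemma isInvertible_fderiv_phaseEq_comp_inr :
    (fderiv ℝ phaseEq ((baseMatrix : Matrix ι ι ℂ), (0 : ι → ℝ)) ∘L
      .inr ℝ (ι → ι → ℂ) (ι → ℝ)).IsInvertible := by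
  have hinr : HasFDerivAt (fun θ => phaseEq ((baseMatrix : Matrix ι ι ℂ), θ))
      (fderiv ℝ phaseEq ((baseMatrix : Matrix ι ι ℂ), (0 : ι → ℝ)) ∘L
        .inr ℝ (ι → ι → ℂ) (ι → ℝ)) 0 :=
    ((contDiff_phaseEq.differentiable one_ne_zero _).hasFDerivAt).comp 0
      (hasFDerivAt_prodMk_right _ _)
  rw [hinr.unique hasFDerivAt_phaseEq_baseMatrix]
  refine .of_inverse (g := (2⁻¹ : ℝ) • ContinuousLinearMap.id ℝ (ι → ℝ)) ?_ ?_ <;>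
    ext <;> simp

lemma eventually_exists_phaseEq_eq_one :
    ∀ᶠ A in 𝓝 (baseMatrix : Matrix ι ι ℂ), ∃ θ, phaseEq (A, θ) = 1 := by
  have hF : ContDiffAt ℝ 1 phaseEq ((baseMatrix : Matrix ι ι ℂ), (0 : ι → ℝ)) :=
    contDiff_phaseEq.contDiffAt
  filter_upwards [hF.eventually_apply_implicitFunction one_ne_zero
    isInvertible_fderiv_phaseEq_comp_inr] with A hA
  exact ⟨_, hA.trans phaseEq_baseMatrix_zero⟩

end BaseMatrix

end Biunimodular

end

open Biunimodular in
theorem biuniSet_interior_nonempty_general (n : ℕ) :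
    (interior (biuniSet n)).Nonempty := by
  refine ⟨⟨baseMatrix, baseMatrix_mem_unitaryGroup⟩, mem_interior_iff_mem_nhds.2 ?_⟩
  filter_upwards [continuous_subtype_val.continuousAt.eventually eventually_exists_phaseEq_eq_one]
    with A ⟨θ, hθ⟩
  exact ⟨phaseVec θ, norm_phaseVec θ, norm_mulVec_phaseVec_eq_one A.2 hθ⟩

/-- For every `n ≥ 1`, the set `𝓑ₙ` of unitary matrices with a biunimodular vector
has nonempty interior in `U(n)`. -/
theorem biuniSet_interior_nonempty (n : ℕ) (hn : 1 ≤ n) :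
    (interior (biuniSet n)).Nonempty :=
  biuniSet_interior_nonempty_general n
end

section
/- Let n ≥ 1 and let S be an n×n unitary matrix with S·𝟏 = 𝟏. Let 𝔲 denote the real vector space of n×n skew-Hermitian complex matrices, 𝔡 ⊂ 𝔲 the subspace of diagonal matrices with purely imaginary diagonal entries, 𝔡₁ ⊂ 𝔡 the subspace of such matrices whose (1,1) entry is 0, and 𝔣 = {X ∈ 𝔲 : X·𝟏 = 0}. Then the rank of the ℝ-linear map C_S : 𝔡 × 𝔣 × 𝔡₁ → 𝔲 given by C_S(X, Y, Z) = X + Y + S·Z·S* equals (n−1)² + n + rank(Im S), where Im S is the real n×n matrix of imaginary parts of the entries of S and its rank is taken over ℝ. -/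
open Matrix

/-- The real vector space `𝔡` of diagonal matrices with purely imaginary diagonal
entries. -/
noncomputable def diagImag (n : ℕ) : Submodule ℝ (Matrix (Fin n) (Fin n) ℂ) where
  carrier := {X | X.IsDiag ∧ ∀ i, (X i i).re = 0}
  add_mem' := by
    rintro a b ⟨ha, ha'⟩ ⟨hb, hb'⟩
    exact ⟨ha.add hb, fun i => by simp [ha' i, hb' i]⟩
  zero_mem' := ⟨Matrix.isDiag_zero, fun i => by simp⟩
  smul_mem' := by
    rintro r X ⟨hX, hX'⟩
    exact ⟨hX.smul r, fun i => by simp [hX' i]⟩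

/-- The real vector space `𝔡₁ ⊂ 𝔡` of diagonal matrices with purely imaginary
diagonal entries whose `(1,1)` entry vanishes. -/
noncomputable def diagImag₁ (n : ℕ) (hn : 0 < n) : Submodule ℝ (Matrix (Fin n) (Fin n) ℂ) where
  carrier := {X | X.IsDiag ∧ (∀ i, (X i i).re = 0) ∧ X ⟨0, hn⟩ ⟨0, hn⟩ = 0}
  add_mem' := by
    rintro a b ⟨ha, ha', ha''⟩ ⟨hb, hb', hb''⟩
    exact ⟨ha.add hb, fun i => by simp [ha' i, hb' i], by simp [ha'', hb'']⟩
  zero_mem' := ⟨Matrix.isDiag_zero, fun i => by simp, by simp⟩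
  smul_mem' := by
    rintro r X ⟨hX, hX', hX''⟩
    exact ⟨hX.smul r, fun i => by simp [hX' i], by simp [hX'']⟩

/-- The real vector space `𝔣` of skew-Hermitian matrices annihilating the all-ones
vector. -/
noncomputable def skewFix (n : ℕ) : Submodule ℝ (Matrix (Fin n) (Fin n) ℂ) where
  carrier := {X | Xᴴ = -X ∧ X.mulVec (fun _ => 1) = 0}
  add_mem' := by
    rintro a b ⟨ha, ha'⟩ ⟨hb, hb'⟩
    constructor
    · rw [conjTranspose_add, ha, hb, neg_add]
    · rw [add_mulVec, ha', hb', add_zero]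
  zero_mem' := ⟨by simp, by simp⟩
  smul_mem' := by
    rintro r X ⟨hX, hX'⟩
    constructor
    · rw [conjTranspose_smul, hX, star_trivial, smul_neg]
    · rw [smul_mulVec, hX', smul_zero]

/-- The `ℝ`-linear map `C_S(X, Y, Z) = X + Y + S·Z·S*`. -/
noncomputable def CSmap (n : ℕ) (hn : 0 < n) (S : Matrix (Fin n) (Fin n) ℂ) :
    (diagImag n × skewFix n × diagImag₁ n hn) →ₗ[ℝ] Matrix (Fin n) (Fin n) ℂ where
  toFun p := (p.1 : Matrix (Fin n) (Fin n) ℂ) + (p.2.1 : Matrix (Fin n) (Fin n) ℂ) +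
    S * (p.2.2 : Matrix (Fin n) (Fin n) ℂ) * Sᴴ
  map_add' p q := by
    simp only [Prod.fst_add, Prod.snd_add, Submodule.coe_add, Matrix.add_mul,
      Matrix.mul_add]
    abel
  map_smul' r p := by
    simp only [Prod.smul_fst, Prod.smul_snd, Submodule.coe_smul, Matrix.smul_mul,
      Matrix.mul_smul, RingHom.id_apply, smul_add]

/-!
By rank–nullity it suffices to know the dimensions `dim 𝔡 = n`, `dim 𝔡₁ = n - 1`,
`dim 𝔣 = (n - 1)²` and the dimension of the kernel of `C_S`.

For `𝔣`: the map `X ↦ X𝟏` sends the `n²`-dimensional space `𝔲` onto the vectors whose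
coordinate sum is purely imaginary, a hyperplane of `ℂⁿ ≅ ℝ²ⁿ`, and its kernel is `𝔣`.

For the kernel: write `X = diag(i x)` and `Z = diag(i t)`. Then `C_S(X, Y, Z) = 0` forces
`Y = -X - S Z S*`, and since `S* 𝟏 = 𝟏` the remaining condition `Y 𝟏 = 0` reads
`(Im S) t = 0` and `x = -(Re S) t`. Hence the kernel is isomorphic to
`{t ∈ ker (Im S) | t₁ = 0}`, of dimension `n - rank (Im S) - 1` because `𝟏 ∈ ker (Im S)`.
-/

open Module Complex

section SkewAdjoint

variable {A : Type*} [AddCommGroup A] [Module ℂ A] [StarAddMonoid A] [StarModule ℂ A]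

noncomputable def skewAdjointEquivSelfAdjoint : skewAdjoint A ≃ₗ[ℝ] selfAdjoint A :=
  { skewAdjoint.negISMul with
    invFun := fun a => ⟨I • (a : A), by simp⟩
    left_inv := fun a => Subtype.ext (by simp [smul_smul])
    right_inv := fun a => Subtype.ext (by simp [smul_smul]) }

theorem two_mul_finrank_skewAdjoint [FiniteDimensional ℝ A] :
    2 * finrank ℝ (skewAdjoint A) = finrank ℝ A := by
  have : Module.Finite ℝ (selfAdjoint A) :=
    .of_injective (selfAdjoint.submodule ℝ A).subtype Subtype.val_injective
  have : Module.Finite ℝ (skewAdjoint A) :=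
    .of_injective (skewAdjoint.submodule ℝ A).subtype Subtype.val_injective
  rw [(StarModule.decomposeProdAdjoint ℝ A).finrank_eq, finrank_prod,
    skewAdjointEquivSelfAdjoint.finrank_eq]
  ring

end SkewAdjoint

theorem Matrix.finrank_skewAdjoint (ι : Type*) [Fintype ι] :
    finrank ℝ (skewAdjoint (Matrix ι ι ℂ)) = Fintype.card ι ^ 2 := by
  have h := two_mul_finrank_skewAdjoint (A := Matrix ι ι ℂ)
  rw [finrank_matrix, Complex.finrank_real_complex] at h
  linarith

theorem Submodule.finrank_inf_ker_add_one {K V : Type*} [DivisionRing K] [AddCommGroup V]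
    [Module K V] (p : Submodule K V) [FiniteDimensional K p] (f : Dual K V) {x : V}
    (hx : x ∈ p) (hfx : f x ≠ 0) :
    finrank K ↥(p ⊓ LinearMap.ker f) + 1 = finrank K p := by
  have hf : f ∘ₗ p.subtype ≠ 0 := fun h => hfx (LinearMap.congr_fun h ⟨x, hx⟩)
  rw [← Dual.finrank_ker_add_one_of_ne_zero hf, LinearMap.ker_comp,
    ← (comapSubtypeEquivOfLe (inf_le_left : p ⊓ LinearMap.ker f ≤ p)).finrank_eq,
    Submodule.comap_inf, Submodule.comap_subtype_self, top_inf_eq]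

theorem finrank_ker_proj {K ι : Type*} [Field K] [Fintype ι] (i : ι) :
    finrank K (LinearMap.ker (LinearMap.proj i : (ι → K) →ₗ[K] K)) + 1 =
      Fintype.card ι := by
  classical
  have h : (LinearMap.proj i : (ι → K) →ₗ[K] K) ≠ 0 := fun h0 => by
    simpa using LinearMap.congr_fun h0 (Pi.single i 1)
  rw [Dual.finrank_ker_add_one_of_ne_zero h, finrank_pi]

theorem conjTranspose_mulVec_eq_of_mulVec_eq {ι α : Type*} [Fintype ι] [DecidableEq ι]
    [CommRing α] [StarRing α] {S : Matrix ι ι α} (hS : S ∈ unitaryGroup ι α)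
    {v : ι → α} (hv : S *ᵥ v = v) : Sᴴ *ᵥ v = v := by
  conv_lhs => rw [← hv, mulVec_mulVec, ← star_eq_conjTranspose, mem_unitaryGroup_iff'.mp hS,
    one_mulVec]

theorem mulVec_ofReal_mul_I {m k : Type*} [Fintype k] (S : Matrix m k ℂ) (t : k → ℝ) :
    (S *ᵥ fun j => (t j : ℂ) * I) =
      fun i => ⟨-(S.map im *ᵥ t) i, (S.map re *ᵥ t) i⟩ := by
  funext i
  apply Complex.ext <;> simp [mulVec, dotProduct, Complex.re_sum, Complex.im_sum, mul_comm]

theorem map_im_mulVec_one {m k : Type*} [Fintype k] {S : Matrix m k ℂ}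
    (hS1 : (S *ᵥ fun _ => 1) = fun _ => 1) : (S.map im *ᵥ fun _ => 1) = 0 := by
  funext i
  simpa [mulVec, dotProduct, Complex.im_sum] using congrArg im (congrFun hS1 i)

section SkewFix

variable {ι : Type*} [Fintype ι]

variable (ι) in
noncomputable def sumRe : (ι → ℂ) →ₗ[ℝ] ℝ :=
  ∑ i, reLm ∘ₗ LinearMap.proj i

theorem sumRe_apply (v : ι → ℂ) : sumRe ι v = (∑ i, v i).re := by
  simp [sumRe, Complex.re_sum]

theorem finrank_ker_sumRe [Nonempty ι] :
    finrank ℝ (LinearMap.ker (sumRe ι)) + 1 = 2 * Fintype.card ι := by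
  classical
  obtain ⟨i⟩ := ‹Nonempty ι›
  have h : sumRe ι (Pi.single i 1) ≠ 0 := by simp [sumRe_apply]
  rw [Dual.finrank_ker_add_one_of_ne_zero (f := sumRe ι) (fun h0 => h (by rw [h0]; rfl)),
    finrank_pi_fintype]
  simp [Complex.finrank_real_complex, mul_comm]

variable (ι) in
noncomputable def mulVecOneLin : Matrix ι ι ℂ →ₗ[ℝ] (ι → ℂ) where
  toFun X := X *ᵥ fun _ => 1
  map_add' X Y := add_mulVec X Y _
  map_smul' r X := smul_mulVec r X _

theorem sumRe_mulVec_one_of_star_eq_neg {X : Matrix ι ι ℂ} (hX : star X = -X) :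
    sumRe ι (X *ᵥ fun _ => 1) = 0 := by
  have hherm : (I • X).IsHermitian := by
    rw [IsHermitian, conjTranspose_smul, ← star_eq_conjTranspose, hX]
    simp
  have := hherm.im_star_dotProduct_mulVec_self (fun _ => 1)
  simpa [sumRe_apply, dotProduct, smul_mulVec, ← Finset.mul_sum] using this

theorem exists_star_eq_neg_mulVec_one_eq [Nonempty ι] {v : ι → ℂ} (hv : sumRe ι v = 0) :
    ∃ W : Matrix ι ι ℂ, star W = -W ∧ (W *ᵥ fun _ => 1) = v := by
  rw [sumRe_apply] at hv
  set a := ∑ i, v i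
  set N : ℂ := (Fintype.card ι : ℂ)
  have ha : star a = -a := by
    apply Complex.ext <;> simp [hv]
  have hN : N ≠ 0 := by simp [N]
  -- `(v 𝟏ᵀ - 𝟏 v*) / N` is skew-Hermitian and, as `conj a = -a`, maps `𝟏` to
  -- `v + (a / N) 𝟏`; the last term removes `(a / N) 𝟏`.
  refine ⟨of fun k j => (v k - star (v j)) / N - a / N ^ 2, ?_, ?_⟩
  · ext k j
    simp only [star_eq_conjTranspose, conjTranspose_apply, of_apply, Matrix.neg_apply, star_sub,
      star_div₀, star_pow, star_star, ha, star_natCast, N]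
    ring
  · funext k
    have hsum : ∑ j, star (v j) = -a := by rw [← star_sum, ha]
    simp only [mulVec, dotProduct, of_apply, mul_one, Finset.sum_sub_distrib, ← Finset.sum_div,
      hsum, Finset.sum_const, Finset.card_univ, nsmul_eq_mul]
    field_simp
    ring

end SkewFix

theorem finrank_skewFix {n : ℕ} (hn : 0 < n) : finrank ℝ (skewFix n) = (n - 1) ^ 2 := by
  have : Nonempty (Fin n) := ⟨⟨0, hn⟩⟩
  set U := skewAdjoint.submodule ℝ (Matrix (Fin n) (Fin n) ℂ)
  set ψ := mulVecOneLin (Fin n) ∘ₗ U.subtype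
  have hker : LinearMap.ker ψ = (skewFix n).comap U.subtype := by
    ext X
    have hX : (X : Matrix (Fin n) (Fin n) ℂ)ᴴ = -X := X.2
    simp [ψ, mulVecOneLin, skewFix, hX]
  have hrange : LinearMap.range ψ = LinearMap.ker (sumRe (Fin n)) := by
    apply le_antisymm
    · rintro _ ⟨X, rfl⟩
      exact sumRe_mulVec_one_of_star_eq_neg X.2
    · intro v hv
      obtain ⟨W, hW, hWv⟩ := exists_star_eq_neg_mulVec_one_eq hv
      exact ⟨⟨W, hW⟩, hWv⟩
  have hU : finrank ℝ U = n ^ 2 :=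
    (Matrix.finrank_skewAdjoint (Fin n)).trans (by rw [Fintype.card_fin])
  have h := LinearMap.finrank_range_add_finrank_ker ψ
  rw [hrange, hker, hU, (Submodule.comapSubtypeEquivOfLe (p := skewFix n) (q := U)
    fun _ hX => hX.1).finrank_eq] at h
  have hsum := finrank_ker_sumRe (ι := Fin n)
  rw [Fintype.card_fin] at hsum
  obtain ⟨m, rfl⟩ : ∃ m, n = m + 1 := ⟨n - 1, by omega⟩
  simp only [Nat.add_sub_cancel]
  nlinarith

section ImagDiagonal

variable {ι : Type*} [DecidableEq ι]

variable (ι) in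
noncomputable def imagDiagonal : (ι → ℝ) →ₗ[ℝ] Matrix ι ι ℂ where
  toFun t := diagonal fun j => (t j : ℂ) * I
  map_add' s t := by simp [add_mul]
  map_smul' r t := by ext i j; by_cases h : i = j <;> simp [h, mul_assoc]

theorem imagDiagonal_apply (t : ι → ℝ) :
    imagDiagonal ι t = diagonal fun j => (t j : ℂ) * I :=
  rfl

theorem imagDiagonal_injective : Function.Injective (imagDiagonal ι) := by
  intro s t h
  funext j
  simpa [imagDiagonal_apply] using congrArg (fun X : Matrix ι ι ℂ => (X j j).im) h

theorem conjTranspose_imagDiagonal (t : ι → ℝ) :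
    (imagDiagonal ι t)ᴴ = -imagDiagonal ι t := by
  simp [imagDiagonal_apply, diagonal_conjTranspose, Pi.star_def]

theorem imagDiagonal_mulVec_one [Fintype ι] (t : ι → ℝ) :
    (imagDiagonal ι t *ᵥ fun _ => 1) = fun j => (t j : ℂ) * I := by
  funext j
  simp [imagDiagonal_apply, mulVec_diagonal]

end ImagDiagonal

theorem range_imagDiagonal (n : ℕ) : LinearMap.range (imagDiagonal (Fin n)) = diagImag n := by
  ext X
  constructor
  · rintro ⟨t, rfl⟩
    exact ⟨isDiag_diagonal _, fun i => by simp [imagDiagonal_apply]⟩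
  · rintro ⟨hdiag, hre⟩
    refine ⟨fun j => (X j j).im, ?_⟩
    rw [imagDiagonal_apply, ← hdiag.diagonal_diag]
    congr 1
    funext j
    apply Complex.ext <;> simp [hre j]

theorem map_imagDiagonal_ker_proj {n : ℕ} (hn : 0 < n) :
    (LinearMap.ker (LinearMap.proj ⟨0, hn⟩ : (Fin n → ℝ) →ₗ[ℝ] ℝ)).map
      (imagDiagonal (Fin n)) =
      diagImag₁ n hn := by
  ext X
  constructor
  · rintro ⟨t, ht, rfl⟩
    have hX := (range_imagDiagonal n).le ⟨t, rfl⟩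
    exact ⟨hX.1, hX.2, by simpa [imagDiagonal_apply] using ht⟩
  · rintro ⟨hdiag, hre, h0⟩
    obtain ⟨t, rfl⟩ := (range_imagDiagonal n).ge ⟨hdiag, hre⟩
    exact ⟨t, by simpa [imagDiagonal_apply] using h0, rfl⟩

theorem finrank_diagImag (n : ℕ) : finrank ℝ (diagImag n) = n := by
  rw [← range_imagDiagonal, LinearMap.finrank_range_of_inj imagDiagonal_injective,
    finrank_fin_fun]

theorem finrank_diagImag₁ {n : ℕ} (hn : 0 < n) : finrank ℝ (diagImag₁ n hn) + 1 = n := by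
  rw [← map_imagDiagonal_ker_proj hn,
    ← (Submodule.equivMapOfInjective _ imagDiagonal_injective _).finrank_eq, finrank_ker_proj,
    Fintype.card_fin]

section Kernel

variable {n : ℕ} {hn : 0 < n} {S : Matrix (Fin n) (Fin n) ℂ}

theorem neg_imagDiagonal_sub_mem_skewFix_iff (hS : S ∈ unitaryGroup (Fin n) ℂ)
    (hS1 : (S *ᵥ fun _ => 1) = fun _ => 1) (x t : Fin n → ℝ) :
    -imagDiagonal _ x - S * imagDiagonal _ t * Sᴴ ∈ skewFix n ↔
      S.map im *ᵥ t = 0 ∧ x = -(S.map re *ᵥ t) := by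
  have hskew : (-imagDiagonal _ x - S * imagDiagonal _ t * Sᴴ)ᴴ =
      -(-imagDiagonal _ x - S * imagDiagonal _ t * Sᴴ) := by
    simp only [conjTranspose_sub, conjTranspose_neg, conjTranspose_mul,
      conjTranspose_conjTranspose, conjTranspose_imagDiagonal, Matrix.mul_neg, Matrix.neg_mul,
      Matrix.mul_assoc]
    abel
  have hvec : ((-imagDiagonal _ x - S * imagDiagonal _ t * Sᴴ) *ᵥ fun _ => 1) =
      fun k => ⟨(S.map im *ᵥ t) k, -x k - (S.map re *ᵥ t) k⟩ := by
    rw [sub_mulVec, neg_mulVec, ← mulVec_mulVec, ← mulVec_mulVec,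
      conjTranspose_mulVec_eq_of_mulVec_eq hS hS1, imagDiagonal_mulVec_one, imagDiagonal_mulVec_one,
      mulVec_ofReal_mul_I]
    funext k
    apply Complex.ext <;> simp
  simp only [skewFix, Submodule.mem_mk, AddSubmonoid.mem_mk, AddSubsemigroup.mem_mk,
    Set.mem_ofPred_eq, hskew, hvec, true_and, funext_iff, Complex.ext_iff, Pi.zero_apply,
    Pi.neg_apply, Complex.zero_re, Complex.zero_im, forall_and]
  refine and_congr_right' (forall_congr' fun k => ?_)
  constructor <;> intro h <;> linarith

theorem exists_imagDiagonal_of_mem_ker_CSmap {p : diagImag n × skewFix n × diagImag₁ n hn}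
    (hp : p ∈ LinearMap.ker (CSmap n hn S)) :
    ∃ x t : Fin n → ℝ, t ⟨0, hn⟩ = 0 ∧
      (p.1 : Matrix (Fin n) (Fin n) ℂ) = imagDiagonal _ x ∧
      (p.2.2 : Matrix (Fin n) (Fin n) ℂ) = imagDiagonal _ t ∧
      (p.2.1 : Matrix (Fin n) (Fin n) ℂ) = -imagDiagonal _ x - S * imagDiagonal _ t * Sᴴ := by
  obtain ⟨x, hx⟩ := (range_imagDiagonal n).ge p.1.2
  obtain ⟨t, ht, hz⟩ := (map_imagDiagonal_ker_proj hn).ge p.2.2.2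
  refine ⟨x, t, ht, hx.symm, hz.symm, ?_⟩
  have hsum : (p.1 : Matrix (Fin n) (Fin n) ℂ) + p.2.1 + S * p.2.2 * Sᴴ = 0 := hp
  rw [hx, hz, ← sub_eq_zero, ← hsum, ← hx, ← hz]
  abel

variable (n hn S) in
noncomputable def kerCSmapDiag : LinearMap.ker (CSmap n hn S) →ₗ[ℝ] (Fin n → ℝ) where
  toFun p j := ((p.1.2.2 : Matrix (Fin n) (Fin n) ℂ) j j).im
  map_add' p q := by funext j; simp
  map_smul' r p := by funext j; simp

theorem kerCSmapDiag_injective (hS : S ∈ unitaryGroup (Fin n) ℂ)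
    (hS1 : (S *ᵥ fun _ => 1) = fun _ => 1) : Function.Injective (kerCSmapDiag n hn S) := by
  refine (injective_iff_map_eq_zero _).mpr fun p hp => ?_
  obtain ⟨x, t, -, hX, hZ, hY⟩ := exists_imagDiagonal_of_mem_ker_CSmap p.2
  obtain rfl : t = 0 := funext fun j => by
    simpa [kerCSmapDiag, hZ, imagDiagonal_apply] using congrFun hp j
  have hYmem := p.1.2.1.2
  rw [hY, neg_imagDiagonal_sub_mem_skewFix_iff hS hS1] at hYmem
  obtain rfl : x = 0 := by simpa using hYmem.2
  refine Subtype.ext (Prod.ext (Subtype.ext ?_) (Prod.ext (Subtype.ext ?_) (Subtype.ext ?_)))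
  · simpa using hX
  · simpa using hY
  · simpa using hZ

theorem range_kerCSmapDiag (hS : S ∈ unitaryGroup (Fin n) ℂ)
    (hS1 : (S *ᵥ fun _ => 1) = fun _ => 1) :
    LinearMap.range (kerCSmapDiag n hn S) =
      LinearMap.ker (S.map im).mulVecLin ⊓ LinearMap.ker (LinearMap.proj ⟨0, hn⟩) := by
  apply le_antisymm
  · rintro _ ⟨p, rfl⟩
    obtain ⟨x, t, ht0, -, hZ, hY⟩ := exists_imagDiagonal_of_mem_ker_CSmap p.2
    have hYmem := p.1.2.1.2
    rw [hY, neg_imagDiagonal_sub_mem_skewFix_iff hS hS1] at hYmem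
    have hp : kerCSmapDiag n hn S p = t := funext fun j => by
      simp [kerCSmapDiag, hZ, imagDiagonal_apply]
    rw [hp]
    exact ⟨hYmem.1, ht0⟩
  · rintro t ⟨ht, ht0⟩
    set x := -(S.map re *ᵥ t)
    have hY := (neg_imagDiagonal_sub_mem_skewFix_iff hS hS1 x t).mpr ⟨ht, rfl⟩
    refine ⟨⟨(⟨_, (range_imagDiagonal n).le ⟨x, rfl⟩⟩, ⟨_, hY⟩,
      ⟨_, (map_imagDiagonal_ker_proj hn).le ⟨t, ht0, rfl⟩⟩), ?_⟩, ?_⟩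
    · show imagDiagonal _ x + (-imagDiagonal _ x - S * imagDiagonal _ t * Sᴴ) +
        S * imagDiagonal _ t * Sᴴ = 0
      abel
    · funext j
      simp [kerCSmapDiag, imagDiagonal_apply]

theorem finrank_ker_CSmap_add_one_add_rank (hS : S ∈ unitaryGroup (Fin n) ℂ)
    (hS1 : (S *ᵥ fun _ => 1) = fun _ => 1) :
    finrank ℝ (LinearMap.ker (CSmap n hn S)) + 1 + (S.map im).rank = n := by
  rw [← LinearMap.finrank_range_of_inj (kerCSmapDiag_injective hS hS1),
    range_kerCSmapDiag hS hS1,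
    Submodule.finrank_inf_ker_add_one _ _ (LinearMap.mem_ker.mpr (map_im_mulVec_one hS1))
      (by simp), Matrix.rank, add_comm, LinearMap.finrank_range_add_finrank_ker, finrank_fin_fun]

end Kernel

/-- The rank of `C_S : 𝔡 × 𝔣 × 𝔡₁ → 𝔲` equals `(n−1)² + n + rank(Im S)` for any
unitary `S` fixing the all-ones vector. -/
theorem rank_CSmap (n : ℕ) (hn : 0 < n) (S : Matrix (Fin n) (Fin n) ℂ)
    (hS : S ∈ Matrix.unitaryGroup (Fin n) ℂ)
    (hS1 : S.mulVec (fun _ => 1) = (fun _ => 1)) :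
    Module.finrank ℝ (LinearMap.range (CSmap n hn S)) =
      (n - 1) ^ 2 + n + (S.map Complex.im).rank := by
  have : FiniteDimensional ℝ (diagImag n × skewFix n × diagImag₁ n hn) := Module.Finite.prod
  have hdom := LinearMap.finrank_range_add_finrank_ker (CSmap n hn S)
  rw [finrank_prod, finrank_prod, finrank_diagImag, finrank_skewFix hn] at hdom
  have hker := finrank_ker_CSmap_add_one_add_rank (hn := hn) hS hS1
  have h₁ := finrank_diagImag₁ hn
  omega
end

section
/- Let n ≥ 1 and let u ∈ ℂⁿ be such that the sum s = ∑_k u_k is a real number with s > 0. Then max_k | |u_k| − u_k |² ≤ ‖u‖₁ · (‖u‖₁ − s), where ‖u‖₁ = ∑_k |u_k| and |u_k| is viewed as a complex number in the difference |u_k| − u_k. -/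
/-!
Write `u_k = z` and let `w` be the sum of the other entries, so that `z + w = s` is real and
`‖w‖ ≤ R := ‖u‖₁ - ‖z‖`. Since `|‖z‖ - z|² = 2‖z‖(‖z‖ - Re z)`, everything reduces to a real
inequality in `a = ‖z‖`, `r = Re z`, `ρ = Re w` and `R`, whose only link between `z` and `w` is
`a² - r² = (Im z)² = (Im w)² ≤ R² - ρ²`, a consequence of `Im (z + w) = 0`.
-/

lemma two_mul_mul_sub_le_of_sq_sub_sq_le {a r R ρ : ℝ} (hr : r ≤ a) (hρ : |ρ| ≤ R)
    (hs : 0 < r + ρ) (h : a ^ 2 - r ^ 2 ≤ R ^ 2 - ρ ^ 2) :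
    2 * a * (a - r) ≤ (a + R) * (a + R - (r + ρ)) := by
  obtain ⟨hρR', hρR⟩ := abs_le.mp hρ
  have hrR : 0 ≤ r + R := by linarith
  -- the gap is `(R - a) * (a - r) + (a + R) * (R - ρ)`
  suffices (a - R) * (a - r) ≤ (a + R) * (R - ρ) by linarith
  rcases le_or_gt a R with haR | hRa
  · linarith [mul_nonneg (sub_nonneg.2 haR) (sub_nonneg.2 hr),
      mul_nonneg (show 0 ≤ a + R by linarith) (sub_nonneg.2 hρR)]
  · calc (a - R) * (a - r) ≤ (a + r) * (a - r) := by gcongr; linarith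
      _ = a ^ 2 - r ^ 2 := by ring
      _ ≤ R ^ 2 - ρ ^ 2 := h
      _ = (R + ρ) * (R - ρ) := by ring
      _ ≤ (a + R) * (R - ρ) := by gcongr

namespace Complex

lemma sq_norm_ofReal_norm_sub (z : ℂ) : ‖(‖z‖ : ℂ) - z‖ ^ 2 = 2 * ‖z‖ * (‖z‖ - z.re) := by
  have h := sq_norm_sub_sq_re z
  rw [Complex.sq_norm, normSq_apply]
  simp only [sub_re, ofReal_re, sub_im, ofReal_im]
  linear_combination -h

lemma sq_norm_ofReal_norm_sub_le {z w : ℂ} {R : ℝ} (him : (z + w).im = 0)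
    (hre : 0 < (z + w).re) (hw : ‖w‖ ≤ R) :
    ‖(‖z‖ : ℂ) - z‖ ^ 2 ≤ (‖z‖ + R) * ((‖z‖ + R) - (z + w).re) := by
  rw [sq_norm_ofReal_norm_sub, add_re]
  have him' : w.im = -z.im := by rw [add_im] at him; linarith
  have hwR : ‖w‖ ^ 2 ≤ R ^ 2 := pow_le_pow_left₀ (norm_nonneg w) hw 2
  refine two_mul_mul_sub_le_of_sq_sub_sq_le (re_le_norm z) ((abs_re_le_norm w).trans hw)
    (by rwa [add_re] at hre) ?_
  rw [sq_norm_sub_sq_re]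
  linarith [sq_norm_sub_sq_re w, show w.im ^ 2 = z.im ^ 2 by rw [him']; ring]

end Complex

theorem abs_sub_self_sq_le_general (n : ℕ) (u : Fin n → ℂ)
    (hreal : (∑ k, u k).im = 0) (hpos : 0 < (∑ k, u k).re) :
    ∀ k, ‖((‖u k‖ : ℂ) - u k)‖ ^ 2 ≤
      (∑ j, ‖u j‖) * ((∑ j, ‖u j‖) - (∑ k, u k).re) := by
  intro k
  rw [← Finset.add_sum_erase _ u (Finset.mem_univ k)] at hreal hpos ⊢
  rw [← Finset.add_sum_erase _ (‖u ·‖) (Finset.mem_univ k)]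
  exact Complex.sq_norm_ofReal_norm_sub_le hreal hpos (norm_sum_le _ _)

/-- If `u ∈ ℂⁿ` has real and positive entry-sum `s`, then for every `k`,
`| |u_k| − u_k |² ≤ ‖u‖₁·(‖u‖₁ − s)`. -/
theorem abs_sub_self_sq_le (n : ℕ) (hn : 1 ≤ n) (u : Fin n → ℂ)
    (hreal : (∑ k, u k).im = 0) (hpos : 0 < (∑ k, u k).re) :
    ∀ k, ‖((‖u k‖ : ℂ) - u k)‖ ^ 2 ≤
      (∑ j, ‖u j‖) * ((∑ j, ‖u j‖) - (∑ k, u k).re) :=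
  abs_sub_self_sq_le_general n u hreal hpos
end
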